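/- arXiv:2108.03836 — 7 statements merged into one kernel-verified Lean document; each statement's English description precedes it below -/
import Mathlib

section
/- For real γ > -1, real k > 0, and a positive integer μ, the integral ∫₀^∞ s^γ ln^μ(s) e^{-ks} ds equals (1/k^{γ+1}) · Σ_{ℓ=0}^{μ} C(μ,ℓ) Γ^{(μ-ℓ)}(γ+1) (-1)^ℓ ln^ℓ(k), where Γ^{(j)} denotes the j-th derivative of the Gamma function. -/
open MeasureTheory Real Set Filter Asymptotics
open scoped Topology

/-! Differentiating `Γ(x) = ∫₀^∞ t^(x-1) e^(-t) dt` under the integral sign `n` times gives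
`Γ⁽ⁿ⁾(x) = ∫₀^∞ t^(x-1) (log t)^n e^(-t) dt`; the Mellin-transform estimates at `0` and `∞` justify
this, since `log` is dominated by any power there. Substituting `t = k s` and expanding
`(log s)^μ = (log t - log k)^μ` by the binomial theorem turns the integral into a combination of
these derivatives at `x = γ + 1`. -/

/-- Complex-valued, so that Mathlib's Mellin transform applies. -/
noncomputable def logPowMulExpNeg (n : ℕ) (t : ℝ) : ℂ := (log t ^ n * exp (-t) : ℝ)

lemma log_smul_logPowMulExpNeg (n : ℕ) :
    (fun t : ℝ => log t • logPowMulExpNeg n t) = logPowMulExpNeg (n + 1) := by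
  funext t
  simp only [logPowMulExpNeg, Complex.real_smul]
  push_cast
  ring

lemma locallyIntegrableOn_logPowMulExpNeg (n : ℕ) :
    LocallyIntegrableOn (logPowMulExpNeg n) (Ioi 0) := by
  refine ContinuousOn.locallyIntegrableOn ?_ measurableSet_Ioi
  refine Complex.continuous_ofReal.comp_continuousOn (ContinuousOn.mul ?_ (by fun_prop))
  exact (continuousOn_log.mono fun t ht => ne_of_gt ht).pow n

lemma logPowMulExpNeg_isBigO_atTop (n : ℕ) (a : ℝ) :
    logPowMulExpNeg n =O[atTop] (· ^ (-a)) := by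
  induction n generalizing a with
  | zero =>
    have h := (isLittleO_exp_neg_mul_rpow_atTop zero_lt_one (-a)).isBigO.norm_left
    rw [← isBigO_norm_left]
    simpa only [logPowMulExpNeg, pow_zero, one_mul, Complex.norm_real, neg_one_mul] using h
  | succ n ih =>
    rw [← log_smul_logPowMulExpNeg]
    exact isBigO_rpow_top_log_smul (lt_add_one a) (ih (a + 1))

lemma logPowMulExpNeg_isBigO_nhdsGT_zero (n : ℕ) {b : ℝ} (hb : 0 < b) :
    logPowMulExpNeg n =O[𝓝[>] 0] (· ^ (-b)) := by
  induction n generalizing b with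
  | zero =>
    refine isBigO_iff.mpr ⟨1, ?_⟩
    filter_upwards [Ioo_mem_nhdsGT (zero_lt_one' ℝ)] with t ht
    simp only [logPowMulExpNeg, pow_zero, one_mul, Complex.norm_real, norm_eq_abs,
      abs_of_pos (exp_pos _), abs_of_pos (rpow_pos_of_pos ht.1 _), one_mul]
    calc exp (-t) ≤ 1 := exp_le_one_iff.mpr (by linarith [ht.1])
      _ = t ^ (0 : ℝ) := (rpow_zero t).symm
      _ ≤ t ^ (-b) := rpow_le_rpow_of_exponent_ge ht.1 ht.2.le (by linarith)
  | succ n ih =>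
    rw [← log_smul_logPowMulExpNeg]
    exact isBigO_rpow_zero_log_smul (half_lt_self hb) (ih (half_pos hb))

lemma mellinConvergent_logPowMulExpNeg (n : ℕ) {s : ℂ} (hs : 0 < s.re) :
    MellinConvergent (logPowMulExpNeg n) s :=
  mellinConvergent_of_isBigO_rpow (locallyIntegrableOn_logPowMulExpNeg n)
    (logPowMulExpNeg_isBigO_atTop n (s.re + 1)) (lt_add_one _)
    (logPowMulExpNeg_isBigO_nhdsGT_zero n (half_pos hs)) (half_lt_self hs)

lemma hasDerivAt_mellin_logPowMulExpNeg (n : ℕ) {s : ℂ} (hs : 0 < s.re) :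
    HasDerivAt (mellin (logPowMulExpNeg n)) (mellin (logPowMulExpNeg (n + 1)) s) s := by
  rw [← log_smul_logPowMulExpNeg]
  exact (mellin_hasDerivAt_of_isBigO_rpow (locallyIntegrableOn_logPowMulExpNeg n)
    (logPowMulExpNeg_isBigO_atTop n (s.re + 1)) (lt_add_one _)
    (logPowMulExpNeg_isBigO_nhdsGT_zero n (half_pos hs)) (half_lt_self hs)).2

lemma cpow_smul_logPowMulExpNeg (n : ℕ) (x : ℝ) {t : ℝ} (ht : 0 < t) :
    (t : ℂ) ^ ((x : ℂ) - 1) • logPowMulExpNeg n t = (t ^ (x - 1) * log t ^ n * exp (-t) : ℝ) := by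
  rw [smul_eq_mul, logPowMulExpNeg, ← Complex.ofReal_one, ← Complex.ofReal_sub,
    ← Complex.ofReal_cpow ht.le]
  push_cast
  ring

lemma mellin_logPowMulExpNeg_ofReal (n : ℕ) (x : ℝ) :
    mellin (logPowMulExpNeg n) x = (∫ t in Ioi 0, t ^ (x - 1) * log t ^ n * exp (-t) : ℝ) := by
  rw [mellin]
  exact (setIntegral_congr_fun measurableSet_Ioi fun t ht =>
    cpow_smul_logPowMulExpNeg n x ht).trans integral_ofReal

lemma integrableOn_rpow_mul_log_pow_mul_exp_neg (n : ℕ) {x : ℝ} (hx : 0 < x) :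
    IntegrableOn (fun t => t ^ (x - 1) * log t ^ n * exp (-t)) (Ioi 0) := by
  have h : IntegrableOn (fun t : ℝ => ((t : ℂ) ^ ((x : ℂ) - 1) • logPowMulExpNeg n t).re) (Ioi 0) :=
    (mellinConvergent_logPowMulExpNeg n (s := x) (by simpa using hx)).re
  refine h.congr_fun (fun t ht => ?_) measurableSet_Ioi
  simp only [cpow_smul_logPowMulExpNeg n x ht, Complex.ofReal_re]

lemma hasDerivAt_integral_rpow_mul_log_pow_mul_exp_neg (n : ℕ) {x : ℝ} (hx : 0 < x) :
    HasDerivAt (fun y => ∫ t in Ioi 0, t ^ (y - 1) * log t ^ n * exp (-t))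
      (∫ t in Ioi 0, t ^ (x - 1) * log t ^ (n + 1) * exp (-t)) x := by
  simpa only [mellin_logPowMulExpNeg_ofReal, Complex.ofReal_re] using
    (hasDerivAt_mellin_logPowMulExpNeg n (s := x) (by simpa using hx)).real_of_complex

theorem iteratedDeriv_Gamma_eq_integral (n : ℕ) {x : ℝ} (hx : 0 < x) :
    iteratedDeriv n Gamma x = ∫ t in Ioi 0, t ^ (x - 1) * log t ^ n * exp (-t) := by
  induction n generalizing x with
  | zero =>
    rw [iteratedDeriv_zero, Gamma_eq_integral hx]
    exact setIntegral_congr_fun measurableSet_Ioi fun t _ => by ring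
  | succ n ih =>
    have h_eq : iteratedDeriv n Gamma =ᶠ[𝓝 x]
        fun y => ∫ t in Ioi 0, t ^ (y - 1) * log t ^ n * exp (-t) :=
      eventually_of_mem (Ioi_mem_nhds hx) fun y hy => ih hy
    rw [iteratedDeriv_succ, h_eq.deriv_eq,
      (hasDerivAt_integral_rpow_mul_log_pow_mul_exp_neg n hx).deriv]

lemma rpow_mul_log_pow_mul_exp_neg_mul_eq_sum (γ : ℝ) (μ : ℕ) {k s : ℝ} (hk : 0 < k)
    (hs : 0 < s) :
    s ^ γ * log s ^ μ * exp (-k * s) = k ^ (-γ) * ∑ ℓ ∈ Finset.range (μ + 1),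
      μ.choose ℓ * (-1) ^ ℓ * log k ^ ℓ *
        ((k * s) ^ γ * log (k * s) ^ (μ - ℓ) * exp (-(k * s))) := by
  have h_log : log s = -log k + log (k * s) := by rw [log_mul hk.ne' hs.ne']; ring
  have h_rpow : s ^ γ = k ^ (-γ) * (k * s) ^ γ := by
    rw [mul_rpow hk.le hs.le, rpow_neg hk.le, inv_mul_cancel_left₀ (rpow_pos_of_pos hk γ).ne']
  rw [h_log, h_rpow, add_pow, Finset.mul_sum, Finset.sum_mul,
    Finset.mul_sum]
  refine Finset.sum_congr rfl fun ℓ _ => ?_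
  rw [neg_pow, neg_mul]
  ring

theorem integral_rpow_log_pow_exp_general (γ k : ℝ) (μ : ℕ) (hγ : γ > -1) (hk : k > 0) :
    ∫ s in Set.Ioi (0 : ℝ), s ^ γ * (Real.log s) ^ μ * Real.exp (-k * s) =
      (1 / k ^ (γ + 1)) *
        ∑ ℓ ∈ Finset.range (μ + 1),
          (μ.choose ℓ : ℝ) * iteratedDeriv (μ - ℓ) Real.Gamma (γ + 1) *
            (-1) ^ ℓ * (Real.log k) ^ ℓ := by
  have hx : 0 < γ + 1 := by linarith
  have h_int (n : ℕ) : IntegrableOn (fun t => t ^ γ * log t ^ n * exp (-t)) (Ioi 0) := by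
    simpa only [add_sub_cancel_right] using integrableOn_rpow_mul_log_pow_mul_exp_neg n hx
  have h_Gamma (n : ℕ) :
      ∫ t in Ioi 0, t ^ γ * log t ^ n * exp (-t) = iteratedDeriv n Gamma (γ + 1) := by
    simpa only [add_sub_cancel_right] using (iteratedDeriv_Gamma_eq_integral n hx).symm
  have h_scale : k⁻¹ * k ^ (-γ) = 1 / k ^ (γ + 1) := by
    rw [rpow_add hk, rpow_one, rpow_neg hk.le, mul_comm, one_div, mul_inv]
  set c : ℕ → ℝ := fun ℓ => μ.choose ℓ * (-1) ^ ℓ * log k ^ ℓ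
  set F : ℕ → ℝ → ℝ := fun n t => t ^ γ * log t ^ n * exp (-t)
  calc ∫ s in Ioi 0, s ^ γ * log s ^ μ * exp (-k * s)
      = ∫ s in Ioi 0, k ^ (-γ) * ∑ ℓ ∈ Finset.range (μ + 1), c ℓ * F (μ - ℓ) (k * s) :=
        setIntegral_congr_fun measurableSet_Ioi fun s hs =>
          rpow_mul_log_pow_mul_exp_neg_mul_eq_sum γ μ hk hs
    _ = k⁻¹ * (k ^ (-γ) * ∑ ℓ ∈ Finset.range (μ + 1), c ℓ * ∫ t in Ioi 0, F (μ - ℓ) t) := by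
        rw [integral_comp_mul_left_Ioi (fun t => k ^ (-γ) * ∑ ℓ ∈ Finset.range (μ + 1),
          c ℓ * F (μ - ℓ) t) 0 hk, mul_zero, smul_eq_mul, integral_const_mul,
          integral_finsetSum _ fun ℓ _ =>
            (h_int (μ - ℓ)).const_mul (c ℓ)]
        simp only [integral_const_mul]
        rfl
    _ = _ := by
        simp only [F, h_Gamma, c]
        rw [← mul_assoc, h_scale, Finset.mul_sum, Finset.mul_sum]
        refine Finset.sum_congr rfl fun ℓ _ => ?_
        ring

/-- For real `γ > -1`, `k > 0` and a positive integer `μ`,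
`∫₀^∞ s^γ (ln s)^μ e^{-ks} ds
  = (1/k^(γ+1)) ∑_{ℓ=0}^{μ} C(μ,ℓ) Γ^{(μ-ℓ)}(γ+1) (-1)^ℓ (ln k)^ℓ`. -/
theorem integral_rpow_log_pow_exp (γ k : ℝ) (μ : ℕ) (hγ : γ > -1) (hk : k > 0)
    (hμ : 1 ≤ μ) :
    ∫ s in Set.Ioi (0 : ℝ), s ^ γ * (Real.log s) ^ μ * Real.exp (-k * s) =
      (1 / k ^ (γ + 1)) *
        ∑ ℓ ∈ Finset.range (μ + 1),
          (μ.choose ℓ : ℝ) * iteratedDeriv (μ - ℓ) Real.Gamma (γ + 1) *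
            (-1) ^ ℓ * (Real.log k) ^ ℓ :=
  integral_rpow_log_pow_exp_general γ k μ hγ hk
end

section
/- Suppose f: [-1,1] → ℝ has an absolutely convergent Chebyshev expansion f(x) = a_0/2 + Σ_{k=1}^∞ a_k T_k(x), and let p_n^I be the degree-n interpolant of f at the Chebyshev points of the first kind x_j = cos((2j+1)π/(2n+2)), j = 0,…,n, written as p_n^I = b_0/2 + Σ_{k=1}^n b_k T_k. Then b_k = a_k + Σ_{ℓ=1}^{∞} (-1)^ℓ (a_{2ℓ(n+1)-k} + a_{2ℓ(n+1)+k}) for k = 0,1,…,n. -/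
/-!
Put `N = n + 1`, `θⱼ = (2j+1)π/(2N)` and `c q = a |q|` for `q ∈ ℤ`. On `[-1, 1]` the Chebyshev
series reads `f (cos θ) = ½ ∑_{q ∈ ℤ} c q cos (qθ)`, and since `c` is even, multiplying by
`cos (kθ)` just shifts it to `½ ∑_q c q cos ((q - k)θ)`. Over the `N` nodes, `∑ⱼ cos (mθⱼ)` is
`N (-1)^(m / 2N)` when `2N ∣ m` and `0` otherwise, so only the indices `q = 2Nℓ + k` survive:
`b_k = ∑_{ℓ ∈ ℤ} (-1)^ℓ a |2Nℓ + k|`. Pairing `ℓ` with `-ℓ` gives the stated formula.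
-/

open Real Finset Polynomial.Chebyshev

lemma summable_comp_natAbs {G : Type*} [AddCommGroup G] [TopologicalSpace G]
    [IsTopologicalAddGroup G] {a : ℕ → G} (ha : Summable a) :
    Summable fun q : ℤ => a q.natAbs :=
  .of_nat_of_neg (by simpa using ha) (by simpa using ha)

lemma tsum_int_eq_zero_add_tsum_nat {G : Type*} [AddCommGroup G] [UniformSpace G]
    [IsUniformAddGroup G] [CompleteSpace G] [T2Space G] {f : ℤ → G} (hf : Summable f) :
    ∑' n, f n = f 0 + ∑' n : ℕ, (f (n + 1) + f (-(n + 1))) := by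
  have hpos : Summable fun n : ℕ => f (n + 1) :=
    hf.comp_injective (i := fun n : ℕ => (n : ℤ) + 1) fun _ _ h => by simpa using h
  have hneg : Summable fun n : ℕ => f (-(n + 1)) :=
    hf.comp_injective (i := fun n : ℕ => -((n : ℤ) + 1)) fun _ _ h => by simpa using h
  rw [tsum_of_add_one_of_neg_add_one hpos hneg, hpos.tsum_add hneg]
  abel

lemma tsum_mul_ite_dvd_sub {R : Type*} [NonUnitalNonAssocSemiring R] [TopologicalSpace R]
    {c g : ℤ → R} {d : ℤ} (hd : d ≠ 0) (k : ℤ) :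
    ∑' q, c q * (if d ∣ q - k then g ((q - k) / d) else 0) = ∑' ℓ, c (d * ℓ + k) * g ℓ := by
  have hinj : Function.Injective fun ℓ => d * ℓ + k := fun ℓ ℓ' h => by
    simpa [hd] using h
  rw [← hinj.tsum_eq]
  · simp [Int.mul_ediv_cancel_left _ hd]
  · intro q hq
    obtain ⟨ℓ, hℓ⟩ : d ∣ q - k := by
      by_contra h
      simp [h] at hq
    exact ⟨ℓ, by simp only; omega⟩

lemma Summable.mul_cos {ι : Type*} {c : ι → ℝ} (hc : Summable c) (φ : ι → ℝ) :
    Summable fun i => c i * cos (φ i) :=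
  hc.abs.of_norm_bounded fun i => by
    simpa [abs_mul] using mul_le_of_le_one_right (abs_nonneg (c i)) (abs_cos_le_one (φ i))

lemma tsum_int_natAbs_mul_cos {a : ℕ → ℝ} (ha : Summable a) (θ : ℝ) :
    ∑' q : ℤ, a q.natAbs * cos (q * θ) =
      a 0 + 2 * ∑' m : ℕ, a (m + 1) * cos ((m + 1) * θ) := by
  rw [tsum_int_eq_zero_add_tsum_nat ((summable_comp_natAbs ha).mul_cos _), ← tsum_mul_left]
  congr 1
  · simp
  refine tsum_congr fun m => ?_
  rw [Int.natAbs_neg, Int.cast_neg, neg_mul, cos_neg, show ((m : ℤ) + 1).natAbs = m + 1 by omega]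
  push_cast
  ring

lemma tsum_mul_cos_mul_cos_of_even {c : ℤ → ℝ} (hc : Summable c) (heven : c.Even)
    (θ : ℝ) (k : ℤ) :
    (∑' q, c q * cos (q * θ)) * cos (k * θ) = ∑' q, c q * cos ((q - k) * θ) := by
  have hshift : ∑' q, c q * cos ((q + k) * θ) = ∑' q, c q * cos ((q - k) * θ) := by
    rw [← (Equiv.neg ℤ).tsum_eq]
    refine tsum_congr fun q => ?_
    rw [Equiv.neg_apply, heven q, Int.cast_neg, ← cos_neg]
    ring_nf
  calc (∑' q, c q * cos (q * θ)) * cos (k * θ)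
      = ∑' q, (c q * cos ((q + k) * θ) + c q * cos ((q - k) * θ)) / 2 := by
        rw [← (hc.mul_cos _).tsum_mul_right]
        refine tsum_congr fun q => ?_
        rw [add_mul, sub_mul, cos_add, cos_sub]
        ring
    _ = ∑' q, c q * cos ((q - k) * θ) := by
        rw [tsum_div_const, (hc.mul_cos _).tsum_add (hc.mul_cos _), hshift]
        ring

lemma sum_cos_int_mul_chebyshevNode {N : ℕ} (hN : N ≠ 0) (q : ℤ) :
    ∑ i ∈ range N, cos (q * ((2 * i + 1) / (2 * N) * π)) =
      if (2 * N : ℤ) ∣ q then (N : ℝ) * (-1) ^ (q / (2 * N)) else 0 := by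
  split_ifs with hq
  · obtain ⟨t, rfl⟩ := hq
    rw [Int.mul_ediv_cancel_left _ (by positivity)]
    have hterm (i : ℕ) :
        cos (((2 * N * t : ℤ) : ℝ) * ((2 * i + 1) / (2 * N) * π)) = (-1 : ℝ) ^ t := by
      have hangle : ((2 * N * t : ℤ) : ℝ) * ((2 * i + 1) / (2 * N) * π) =
          t * π + ((t * i : ℤ) : ℝ) * (2 * π) := by
        push_cast
        field_simp
        ring
      rw [hangle, cos_add_int_mul_two_pi, cos_int_mul_pi]
    rw [sum_congr rfl fun i _ => hterm i, sum_const, card_range, nsmul_eq_mul]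
  · have := sumZeroes_T_of_not_dvd hq
    rw [sumZeroes] at this
    simpa [T_real_cos, hN, pi_ne_zero, mul_comm] using this

theorem average_chebyshevNodes_cos_series_mul_cos {c : ℤ → ℝ} (hc : Summable c)
    (heven : c.Even) {N : ℕ} (hN : N ≠ 0) (k : ℤ) :
    (1 / N : ℝ) * ∑ i ∈ range N, (∑' q, c q * cos (q * ((2 * i + 1) / (2 * N) * π))) *
        cos (k * ((2 * i + 1) / (2 * N) * π)) =
      ∑' ℓ : ℤ, (-1 : ℝ) ^ ℓ * c (2 * N * ℓ + k) := by
  simp_rw [tsum_mul_cos_mul_cos_of_even hc heven]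
  rw [← Summable.tsum_finsetSum fun i _ => hc.mul_cos _]
  simp_rw [← mul_sum, ← Int.cast_sub, sum_cos_int_mul_chebyshevNode hN]
  rw [tsum_mul_ite_dvd_sub (g := fun ℓ => (N : ℝ) * (-1) ^ ℓ) (by positivity), ← tsum_mul_left]
  refine tsum_congr fun ℓ => ?_
  field_simp

lemma tsum_int_neg_one_zpow_mul_natAbs {a : ℕ → ℝ} (ha : Summable a) {N k : ℕ} (hN : N ≠ 0)
    (hk : k ≤ 2 * N) :
    ∑' ℓ : ℤ, (-1 : ℝ) ^ ℓ * a (2 * N * ℓ + k : ℤ).natAbs =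
      a k + ∑' ℓ : ℕ, (-1 : ℝ) ^ (ℓ + 1) * (a (2 * (ℓ + 1) * N - k) + a (2 * (ℓ + 1) * N + k)) := by
  have hinj : Function.Injective fun ℓ : ℤ => 2 * N * ℓ + k := fun ℓ ℓ' h =>
    mul_left_cancel₀ (by positivity : (2 * N : ℤ) ≠ 0) (add_right_cancel h)
  have hF : Summable fun ℓ : ℤ => (-1 : ℝ) ^ ℓ * a (2 * N * ℓ + k : ℤ).natAbs :=
    ((summable_comp_natAbs ha).comp_injective hinj).abs.of_norm_bounded fun ℓ => by
      simp
  rw [tsum_int_eq_zero_add_tsum_nat hF]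
  congr 1
  · simp
  refine tsum_congr fun m => ?_
  have hkm : k ≤ 2 * (m + 1) * N := hk.trans (by nlinarith)
  have hplus : (2 * N * ((m : ℤ) + 1) + k).natAbs = 2 * (m + 1) * N + k := by
    rw [show 2 * N * ((m : ℤ) + 1) + k = ((2 * (m + 1) * N + k : ℕ) : ℤ) by push_cast; ring,
      Int.natAbs_natCast]
  have hminus : (2 * N * -((m : ℤ) + 1) + k).natAbs = 2 * (m + 1) * N - k := by
    rw [← Int.natAbs_neg, show -(2 * N * -((m : ℤ) + 1) + k) = ((2 * (m + 1) * N - k : ℕ) : ℤ) by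
      push_cast [Nat.cast_sub hkm]; ring, Int.natAbs_natCast]
  rw [hplus, hminus, zpow_neg, ← inv_zpow, inv_neg, inv_one]
  norm_cast
  ring

/-- Aliasing formula for interpolation at Chebyshev points of the first kind:
if `f(x) = a₀/2 + ∑_{k≥1} a_k T_k(x)` with `∑ |a_k| < ∞`, and
`b_k = (2/(n+1)) ∑_{j=0}^n f(x_j) T_k(x_j)` with `x_j = cos((2j+1)π/(2n+2))`,
then `b_k = a_k + ∑_{ℓ=1}^∞ (-1)^ℓ (a_{2ℓ(n+1)-k} + a_{2ℓ(n+1)+k})` for `k ≤ n`. -/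
theorem chebyshev_interp_first_kind_aliasing (f : ℝ → ℝ) (a : ℕ → ℝ) (n : ℕ)
    (ha : Summable fun k => |a k|)
    (hf : ∀ x ∈ Set.Icc (-1 : ℝ) 1,
      f x = a 0 / 2 + ∑' k : ℕ, a (k + 1) * (Polynomial.Chebyshev.T ℝ (k + 1)).eval x) :
    ∀ k ≤ n,
      (2 / ((n : ℝ) + 1)) * ∑ j ∈ Finset.range (n + 1),
          f (Real.cos ((2 * j + 1) * π / (2 * n + 2))) *
            (Polynomial.Chebyshev.T ℝ k).eval (Real.cos ((2 * j + 1) * π / (2 * n + 2))) =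
        a k + ∑' ℓ : ℕ, (-1 : ℝ) ^ (ℓ + 1) *
          (a (2 * (ℓ + 1) * (n + 1) - k) + a (2 * (ℓ + 1) * (n + 1) + k)) := by
  intro k hk
  have ha' : Summable a := summable_abs_iff.mp ha
  have hseries (θ : ℝ) : f (cos θ) = (∑' q : ℤ, a q.natAbs * cos (q * θ)) / 2 := by
    rw [hf _ ⟨neg_one_le_cos θ, cos_le_one θ⟩, tsum_int_natAbs_mul_cos ha' θ]
    simp only [T_real_cos]
    push_cast
    ring
  have hnode (j : ℕ) :
      (2 * j + 1) * π / (2 * n + 2) = (2 * j + 1) / (2 * ((n + 1 : ℕ) : ℝ)) * π := by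
    push_cast
    ring
  calc _ = (1 / ((n + 1 : ℕ) : ℝ)) * ∑ j ∈ range (n + 1),
          (∑' q : ℤ, a q.natAbs * cos (q * ((2 * j + 1) / (2 * ((n + 1 : ℕ) : ℝ)) * π))) *
            cos ((k : ℤ) * ((2 * j + 1) / (2 * ((n + 1 : ℕ) : ℝ)) * π)) := by
        simp_rw [hnode, hseries, T_real_cos, mul_sum]
        refine sum_congr rfl fun j _ => ?_
        push_cast
        ring
    _ = _ := average_chebyshevNodes_cos_series_mul_cos (summable_comp_natAbs ha')
          (fun q => by simp) n.succ_ne_zero k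
    _ = _ := tsum_int_neg_one_zpow_mul_natAbs ha' n.succ_ne_zero (by omega)
end

section
/- Suppose f: [-1,1] → ℝ has an absolutely convergent Chebyshev expansion with coefficients a_k, and let p_n^{II} be the degree-n interpolant at the Chebyshev points of the second kind x_j = cos(jπ/n), j = 0,…,n, with coefficients c_k (first and last halved in the expansion). Then c_k = a_k + Σ_{ℓ=1}^{∞} (a_{2ℓn - k} + a_{2ℓn + k}) for k = 0,1,…,n. -/
/-!
At the nodes `x_j = cos θ_j`, `θ_j = jπ/n`, the expansion reads
`f(x_j) = ∑_{m ∈ ℤ} (a_{|m|}/2) cos(m θ_j)`. Summing `2n`-th roots of unity gives the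
discrete orthogonality `(2/n) ∑''_j cos(m θ_j) cos(k θ_j) = [2n ∣ m + k] + [2n ∣ m - k]`,
since the trapezoid sum of an even `2n`-periodic sequence is half its sum over a full period.
Absolute convergence lets the node sum pass under the series, and the symmetry `m ↦ -m` merges
the two indicators, so `c_k = ∑_{ℓ ∈ ℤ} a_{|k + 2ℓn|}`; splitting `ℓ` by sign gives the formula.
-/

open Real Finset

noncomputable def trapezoidSum (n : ℕ) (g : ℕ → ℝ) : ℝ :=
  ∑ j ∈ range (n + 1), (if j = 0 ∨ j = n then (1 : ℝ) / 2 else 1) * g j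

theorem trapezoidSum_add (n : ℕ) (g h : ℕ → ℝ) :
    trapezoidSum n (g + h) = trapezoidSum n g + trapezoidSum n h := by
  simp only [trapezoidSum, Pi.add_apply, mul_add, sum_add_distrib]

theorem trapezoidSum_const_mul (n : ℕ) (c : ℝ) (g : ℕ → ℝ) :
    trapezoidSum n (fun j => c * g j) = c * trapezoidSum n g := by
  simp only [trapezoidSum, mul_sum, mul_left_comm]

theorem trapezoidSum_eq_sum_range {n : ℕ} (hn : n ≠ 0) (g : ℕ → ℝ) :
    trapezoidSum n g = (∑ j ∈ range n, (g j + g (j + 1))) / 2 := by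
  obtain ⟨m, rfl⟩ := Nat.exists_eq_succ_of_ne_zero hn
  have hinner : ∀ j ∈ range m,
      (if j + 1 = 0 ∨ j + 1 = m + 1 then (1 : ℝ) / 2 else 1) * g (j + 1) = g (j + 1) := by
    intro j hj
    rw [if_neg (by simp at hj; omega), one_mul]
  rw [trapezoidSum, sum_range_succ, sum_range_succ', sum_congr rfl hinner, sum_add_distrib,
    sum_range_succ', sum_range_succ (fun j => g (j + 1))]
  simp only [true_or, or_true, if_true]
  ring

theorem two_mul_trapezoidSum_of_symm {n : ℕ} (hn : n ≠ 0) {g : ℕ → ℝ}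
    (hg : ∀ j ≤ 2 * n, g (2 * n - j) = g j) :
    2 * trapezoidSum n g = ∑ j ∈ range (2 * n), g j := by
  have hreflect : ∑ j ∈ range n, g (j + 1) = ∑ j ∈ range n, g (n + j) := by
    rw [← sum_range_reflect]
    refine sum_congr rfl fun j hj => ?_
    have hj : j < n := mem_range.mp hj
    rw [← hg (n + j) (by omega)]
    congr 1
    omega
  rw [trapezoidSum_eq_sum_range hn, sum_add_distrib, hreflect, two_mul n, sum_range_add]
  ring

theorem sum_range_two_mul_cos_int_mul {n : ℕ} (hn : n ≠ 0) (r : ℤ) :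
    ∑ j ∈ range (2 * n), cos (r * (j * π / n)) =
      if (2 * n : ℤ) ∣ r then (2 * n : ℝ) else 0 := by
  have h2n : 2 * n ≠ 0 := by omega
  set ζ := Complex.exp (2 * π * Complex.I / (2 * n : ℕ))
  have hζ : IsPrimitiveRoot ζ (2 * n) := Complex.isPrimitiveRoot_exp _ h2n
  have hcos : ∀ j : ℕ, cos (r * (j * π / n)) = ((ζ ^ r) ^ j).re := by
    intro j
    rw [← zpow_natCast, ← zpow_mul, ← Complex.exp_int_mul, ← Complex.exp_ofReal_mul_I_re]
    congr 2
    push_cast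
    field_simp
  simp_rw [hcos, ← Complex.re_sum]
  split_ifs with hr
  · rw [(hζ.zpow_eq_one_iff_dvd r).mpr (by exact_mod_cast hr)]
    simp
  · have hne : ζ ^ r ≠ 1 := fun h => hr (by exact_mod_cast (hζ.zpow_eq_one_iff_dvd r).mp h)
    have hpow : (ζ ^ r) ^ (2 * n) = 1 := by
      rw [← zpow_natCast, ← zpow_mul, hζ.zpow_eq_one_iff_dvd]
      exact dvd_mul_left _ _
    rw [geom_sum_eq hne, hpow]
    simp

theorem trapezoidSum_cos_int_mul {n : ℕ} (hn : n ≠ 0) (r : ℤ) :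
    trapezoidSum n (fun j => cos (r * (j * π / n))) =
      if (2 * n : ℤ) ∣ r then (n : ℝ) else 0 := by
  have hsymm : ∀ j ≤ 2 * n,
      cos (r * ((2 * n - j : ℕ) * π / n)) = cos (r * (j * π / n)) := by
    intro j hj
    rw [← cos_int_mul_two_pi_sub _ r]
    congr 1
    push_cast [hj]
    field_simp
    ring
  have h := two_mul_trapezoidSum_of_symm hn (g := fun j : ℕ => cos (r * (j * π / n))) hsymm
  rw [sum_range_two_mul_cos_int_mul hn] at h
  split_ifs at h ⊢ <;> linarith

theorem trapezoidSum_cos_mul_cos {n : ℕ} (hn : n ≠ 0) (m k : ℤ) :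
    2 / n * trapezoidSum n (fun j => cos (m * (j * π / n)) * cos (k * (j * π / n))) =
      (if (2 * n : ℤ) ∣ m + k then 1 else 0) + (if (2 * n : ℤ) ∣ m - k then 1 else 0) := by
  have hprod : (fun j : ℕ => cos (m * (j * π / n)) * cos (k * (j * π / n))) =
      fun j : ℕ =>
        2⁻¹ * (cos ((m + k : ℤ) * (j * π / n)) + cos ((m - k : ℤ) * (j * π / n))) := by
    funext j
    rw [← mul_right_inj' (two_ne_zero' ℝ), ← mul_assoc, two_mul_cos_mul_cos]
    push_cast
    field_simp
    ring_nf
  have hn' : (n : ℝ) ≠ 0 := Nat.cast_ne_zero.mpr hn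
  rw [hprod, trapezoidSum_const_mul, ← Pi.add_def, trapezoidSum_add, trapezoidSum_cos_int_mul hn,
    trapezoidSum_cos_int_mul hn]
  split_ifs <;> field_simp <;> norm_num

theorem HasSum.trapezoidSum {ι : Type*} {n : ℕ} {F : ι → ℕ → ℝ} {G : ℕ → ℝ}
    (h : ∀ j, HasSum (fun i => F i j) (G j)) :
    HasSum (fun i => trapezoidSum n (F i)) (trapezoidSum n G) :=
  hasSum_sum fun j _ => (h j).mul_left _

noncomputable def chebyshevSeries (a : ℕ → ℝ) (x : ℝ) : ℝ :=
  a 0 / 2 + ∑' k : ℕ, a (k + 1) * (Polynomial.Chebyshev.T ℝ (k + 1)).eval x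

theorem hasSum_chebyshevSeries_cos {a : ℕ → ℝ} (ha : Summable a) (θ : ℝ) :
    HasSum (fun m : ℤ => a m.natAbs / 2 * cos (m * θ)) (chebyshevSeries a (cos θ)) := by
  have hterm : ∀ k : ℕ, a (k + 1) * (Polynomial.Chebyshev.T ℝ (k + 1)).eval (cos θ) =
      a (k + 1) * cos ((k + 1 : ℕ) * θ) := by
    intro k
    rw [Polynomial.Chebyshev.T_real_cos]
    push_cast
    rfl
  have hsum : Summable fun k : ℕ => a (k + 1) * cos ((k + 1 : ℕ) * θ) := by
    refine (ha.abs.comp_injective (add_left_injective 1)).of_norm_bounded fun k => ?_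
    simpa [abs_mul] using mul_le_of_le_one_right (abs_nonneg _) (abs_cos_le_one _)
  have hhalf := hsum.hasSum.div_const 2
  have h := HasSum.of_add_one_of_neg_add_one (f := fun m : ℤ => a m.natAbs / 2 * cos (m * θ))
    (hhalf.congr_fun fun k => by
      rw [show ((k : ℤ) + 1).natAbs = k + 1 by omega]; push_cast; ring)
    (hhalf.congr_fun fun k => by
      rw [show (-((k : ℤ) + 1)).natAbs = k + 1 by omega]; push_cast; rw [neg_mul, cos_neg]; ring)
  convert h using 1
  simp only [chebyshevSeries, hterm, Int.natAbs_zero, Int.cast_zero, zero_mul, cos_zero]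
  ring

theorem hasSum_ite_dvd_sub_iff {M : Type*} [AddCommMonoid M] [TopologicalSpace M] {d : ℤ}
    (hd : d ≠ 0) (k : ℤ) (f : ℤ → M) {s : M} :
    HasSum (fun m => if d ∣ m - k then f m else 0) s ↔
      HasSum (fun ℓ => f (k + d * ℓ)) s := by
  have hinj : Function.Injective fun ℓ : ℤ => k + d * ℓ := fun ℓ ℓ' h => by
    simpa [hd] using h
  rw [← hinj.hasSum_iff]
  · simp [Function.comp_def]
  · rintro m hm
    rw [if_neg]
    rintro ⟨ℓ, hℓ⟩
    exact hm ⟨ℓ, by simp only; omega⟩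

theorem HasSum.two_mul_of_comp_neg_add {u : ℤ → ℝ} (hu : Summable u) {s : ℝ}
    (h : HasSum (fun m => u (-m) + u m) s) : HasSum (fun m => 2 * u m) s := by
  have hneg : HasSum (fun m => u (-m)) (∑' m, u m) := (Equiv.neg ℤ).hasSum_iff.mpr hu.hasSum
  rw [h.unique (hneg.add hu.hasSum), ← two_mul]
  exact hu.hasSum.mul_left 2

theorem hasSum_trapezoidSum_chebyshevSeries_mul_cos {n : ℕ} (hn : n ≠ 0) {a : ℕ → ℝ}
    (ha : Summable a) (k : ℤ) :
    HasSum (fun ℓ : ℤ => a (k + 2 * n * ℓ).natAbs)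
      (2 / n * trapezoidSum n fun j =>
        chebyshevSeries a (cos (j * π / n)) * cos (k * (j * π / n))) := by
  have hd : (2 * n : ℤ) ≠ 0 := by omega
  set v : ℤ → ℝ := fun m => if (2 * n : ℤ) ∣ m - k then a m.natAbs / 2 else 0
  have hv : Summable v := by
    have habs : Summable fun m : ℤ => a m.natAbs / 2 :=
      (Summable.of_nat_of_neg (f := fun m : ℤ => a m.natAbs) ha (by simpa using ha)).div_const 2
    refine (habs.indicator {m | (2 * n : ℤ) ∣ m - k}).congr fun m => ?_
    simp [v, Set.indicator_apply]
  have hnodes := HasSum.trapezoidSum (n := n) fun j : ℕ =>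
    (hasSum_chebyshevSeries_cos ha (j * π / n)).mul_right (cos (k * (j * π / n)))
  have hfold := hnodes.mul_left (2 / (n : ℝ))
  simp only [mul_assoc, trapezoidSum_const_mul] at hfold
  refine (hasSum_ite_dvd_sub_iff hd k fun m => a m.natAbs).mp
    ((HasSum.two_mul_of_comp_neg_add hv (hfold.congr_fun fun m => ?_)).congr_fun fun m => ?_)
  · have hdvd : (2 * n : ℤ) ∣ -m - k ↔ (2 * n : ℤ) ∣ m + k := by
      rw [← dvd_neg, neg_sub', sub_neg_eq_add, neg_neg]
    rw [mul_left_comm, trapezoidSum_cos_mul_cos hn]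
    simp only [v, hdvd, Int.natAbs_neg]
    split_ifs <;> ring
  · simp only [v]
    split_ifs <;> ring

theorem tsum_int_natAbs_add_two_mul {a : ℕ → ℝ} (ha : Summable a) {n k : ℕ} (hn : n ≠ 0)
    (hk : k ≤ 2 * n) :
    ∑' ℓ : ℤ, a ((k : ℤ) + 2 * n * ℓ).natAbs =
      a k + ∑' ℓ : ℕ, (a (2 * (ℓ + 1) * n - k) + a (2 * (ℓ + 1) * n + k)) := by
  have hpos : ∀ ℓ : ℕ, ((k : ℤ) + 2 * n * (ℓ + 1)).natAbs = 2 * (ℓ + 1) * n + k := by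
    intro ℓ
    have hcast : (k : ℤ) + 2 * n * (ℓ + 1) = ((2 * (ℓ + 1) * n + k : ℕ) : ℤ) := by
      push_cast; ring
    rw [hcast, Int.natAbs_natCast]
  have hle : ∀ ℓ : ℕ, k ≤ 2 * (ℓ + 1) * n := fun ℓ => hk.trans (by nlinarith)
  have hneg : ∀ ℓ : ℕ, ((k : ℤ) + 2 * n * -(ℓ + 1)).natAbs = 2 * (ℓ + 1) * n - k := by
    intro ℓ
    have := hle ℓ
    have hcast : (k : ℤ) + 2 * n * -(ℓ + 1) = -((2 * (ℓ + 1) * n : ℕ) : ℤ) + k := by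
      push_cast; ring
    rw [hcast]
    omega
  have hmono : StrictMono fun ℓ : ℕ => 2 * (ℓ + 1) * n := fun ℓ ℓ' h => by
    simp only
    gcongr
  have hsum₁ : Summable fun ℓ : ℕ => a (2 * (ℓ + 1) * n + k) :=
    ha.comp_injective fun ℓ ℓ' h => hmono.injective (Nat.add_right_cancel h)
  have hsum₂ : Summable fun ℓ : ℕ => a (2 * (ℓ + 1) * n - k) := by
    refine ha.comp_injective fun ℓ ℓ' h => hmono.injective ?_
    have := hle ℓ
    have := hle ℓ'
    omega
  rw [tsum_of_add_one_of_neg_add_one (by simpa only [hpos] using hsum₁)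
    (by simpa only [hneg] using hsum₂)]
  simp only [hpos, hneg, mul_zero, add_zero, Int.natAbs_natCast]
  rw [hsum₂.tsum_add hsum₁]
  ring

/-- Aliasing formula for interpolation at Chebyshev points of the second kind:
if `f(x) = a₀/2 + ∑_{k≥1} a_k T_k(x)` with `∑ |a_k| < ∞`, and
`c_k = (2/n) ∑''_{j=0}^n f(x_j) T_k(x_j)` (first and last terms halved) with
`x_j = cos(jπ/n)`, then `c_k = a_k + ∑_{ℓ=1}^∞ (a_{2ℓn-k} + a_{2ℓn+k})` for `k ≤ n`. -/
theorem chebyshev_interp_second_kind_aliasing (f : ℝ → ℝ) (a : ℕ → ℝ) (n : ℕ)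
    (hn : 1 ≤ n) (ha : Summable fun k => |a k|)
    (hf : ∀ x ∈ Set.Icc (-1 : ℝ) 1,
      f x = a 0 / 2 + ∑' k : ℕ, a (k + 1) * (Polynomial.Chebyshev.T ℝ (k + 1)).eval x) :
    ∀ k ≤ n,
      (2 / (n : ℝ)) * ∑ j ∈ Finset.range (n + 1),
          (if j = 0 ∨ j = n then (1 : ℝ) / 2 else 1) *
            (f (Real.cos (j * π / n)) *
              (Polynomial.Chebyshev.T ℝ k).eval (Real.cos (j * π / n))) =
        a k + ∑' ℓ : ℕ, (a (2 * (ℓ + 1) * n - k) + a (2 * (ℓ + 1) * n + k)) := by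
  intro k hk
  have hn0 : n ≠ 0 := by omega
  have hnodes : ∀ j : ℕ,
      f (cos (j * π / n)) * (Polynomial.Chebyshev.T ℝ k).eval (cos (j * π / n)) =
      chebyshevSeries a (cos (j * π / n)) * cos ((k : ℤ) * (j * π / n)) := fun j => by
    rw [hf _ ⟨neg_one_le_cos _, cos_le_one _⟩, Polynomial.Chebyshev.T_real_cos]
    rfl
  change 2 / (n : ℝ) * trapezoidSum n (fun j => _) = _
  simp only [hnodes]
  rw [← (hasSum_trapezoidSum_chebyshevSeries_mul_cos hn0 ha.of_abs k).tsum_eq,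
    tsum_int_natAbs_add_two_mul ha.of_abs hn0 (by omega)]
end

section
/- Let (a_k) be a sequence of reals with Σ|a_k| < ∞ that is eventually nonnegative and eventually nonincreasing. Then for all sufficiently large n (in particular with all a_k of index > n nonnegative), the absolute value of the 'aliasing error' of the second-kind Chebyshev interpolant at x = 1, namely |Σ_{k=0}^{n} Σ_{ℓ=1}^{∞} (a_{2ℓn-k} + a_{2ℓn+k})|, is at least the absolute value of the aliasing error of the first-kind interpolant at x = 1, namely |Σ_{k=0}^{n} Σ_{ℓ=1}^{∞} (-1)^{ℓ+1} (a_{2ℓ(n+1)-k} + a_{2ℓ(n+1)+k})|. -/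
private lemma anti_of_step {a : ℕ → ℝ} {K : ℕ} (h : ∀ k ≥ K, a (k + 1) ≤ a k) :
    ∀ i j, K ≤ i → i ≤ j → a j ≤ a i := by
  intro i j hKi hij
  induction j with
  | zero => have : i = 0 := by omega
            simp [this]
  | succ j ih =>
    rcases Nat.lt_or_ge i (j + 1) with h1 | h2
    · exact le_trans (h j (by omega)) (ih (by omega))
    · have : i = j + 1 := by omega
      simp [this]

private lemma alt_tsum_bounds {b : ℕ → ℝ} (hb0 : ∀ ℓ, 0 ≤ b ℓ)
    (hbm : ∀ ℓ, b (ℓ + 1) ≤ b ℓ) (hs : Summable b) :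
    0 ≤ (∑' ℓ, (-1 : ℝ) ^ ℓ * b ℓ) ∧ (∑' ℓ, (-1 : ℝ) ^ ℓ * b ℓ) ≤ b 0 := by
  have hse : Summable fun k => b (2 * k) :=
    hs.comp_injective fun x y hxy => by omega
  have hso : Summable fun k => b (2 * k + 1) :=
    hs.comp_injective fun x y hxy => by omega
  have hse' : Summable fun k : ℕ => (-1 : ℝ) ^ (2 * k) * b (2 * k) := by
    refine hse.congr fun k => ?_
    rw [pow_mul]; norm_num
  have hso' : Summable fun k : ℕ => (-1 : ℝ) ^ (2 * k + 1) * b (2 * k + 1) := by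
    refine (hso.neg).congr fun k => ?_
    rw [pow_succ, pow_mul]; ring_nf
  have heven : (∑' k : ℕ, (-1 : ℝ) ^ (2 * k) * b (2 * k)) = ∑' k, b (2 * k) :=
    tsum_congr fun k => by rw [pow_mul]; norm_num
  have hodd : (∑' k : ℕ, (-1 : ℝ) ^ (2 * k + 1) * b (2 * k + 1))
      = -∑' k, b (2 * k + 1) := by
    rw [← tsum_neg]
    exact tsum_congr fun k => by rw [pow_succ, pow_mul]; norm_num
  have hkey : (∑' ℓ, (-1 : ℝ) ^ ℓ * b ℓ)
      = (∑' k, b (2 * k)) - ∑' k, b (2 * k + 1) := by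
    have h := tsum_even_add_odd (f := fun ℓ => (-1 : ℝ) ^ ℓ * b ℓ) hse' hso'
    rw [← h, heven, hodd]
    ring
  constructor
  · rw [hkey, sub_nonneg]
    exact Summable.tsum_le_tsum (fun k => hbm (2 * k)) hso hse
  · rw [hkey]
    have hshift : Summable fun k : ℕ => b (2 * (k + 1)) :=
      hs.comp_injective fun x y hxy => by omega
    have h0 : (∑' k, b (2 * k)) = b 0 + ∑' k, b (2 * (k + 1)) := by
      simpa using Summable.tsum_eq_zero_add hse
    have hle : (∑' k : ℕ, b (2 * (k + 1))) ≤ ∑' k, b (2 * k + 1) := by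
      refine Summable.tsum_le_tsum (fun k => ?_) hshift hso
      have := hbm (2 * k + 1)
      have h2 : 2 * (k + 1) = 2 * k + 1 + 1 := by omega
      rw [h2]; exact this
    linarith

/-- If `(a_k)` is absolutely summable, eventually nonnegative and eventually
nonincreasing, then for all sufficiently large `n` the aliasing error at `x = 1`
of the second-kind Chebyshev interpolant dominates, in absolute value, the one of
the first-kind interpolant. -/
theorem aliasing_error_second_ge_first (a : ℕ → ℝ)
    (ha : Summable fun k => |a k|)
    (hpos : ∃ K : ℕ, ∀ k ≥ K, 0 ≤ a k)
    (hmono : ∃ K : ℕ, ∀ k ≥ K, a (k + 1) ≤ a k) :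
    ∃ N : ℕ, ∀ n ≥ N,
      |∑ k ∈ Finset.range (n + 1), ∑' ℓ : ℕ, (-1 : ℝ) ^ (ℓ + 1 + 1) *
          (a (2 * (ℓ + 1) * (n + 1) - k) + a (2 * (ℓ + 1) * (n + 1) + k))| ≤
      |∑ k ∈ Finset.range (n + 1), ∑' ℓ : ℕ,
          (a (2 * (ℓ + 1) * n - k) + a (2 * (ℓ + 1) * n + k))| := by
  obtain ⟨K1, hK1⟩ := hpos
  obtain ⟨K2, hK2⟩ := hmono
  set K := max K1 K2 with hK
  have hpos' : ∀ k ≥ K, 0 ≤ a k := fun k hk => hK1 k (le_trans (le_max_left _ _) hk)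
  have hanti : ∀ i j, K ≤ i → i ≤ j → a j ≤ a i :=
    anti_of_step fun k hk => hK2 k (le_trans (le_max_right _ _) hk)
  have hsa : Summable a := summable_abs_iff.mp ha
  -- basic index facts
  have hfac : ∀ (m ℓ : ℕ), 2 * m ≤ 2 * (ℓ + 1) * m ∧
      2 * (ℓ + 1 + 1) * m = 2 * (ℓ + 1) * m + 2 * m := by
    intro m ℓ
    constructor
    · calc 2 * m = 2 * 1 * m := by ring
        _ ≤ 2 * (ℓ + 1) * m := Nat.mul_le_mul_right m (by omega)
    · ring
  -- summability of the subsequences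
  have hsub : ∀ (m k : ℕ), 1 ≤ m → k ≤ m →
      Summable (fun ℓ : ℕ => a (2 * (ℓ + 1) * m - k) + a (2 * (ℓ + 1) * m + k)) := by
    intro m k hm hk
    have h1 : Summable fun ℓ : ℕ => a (2 * (ℓ + 1) * m - k) := by
      refine hsa.comp_injective (StrictMono.injective ?_)
      refine strictMono_nat_of_lt_succ fun ℓ => ?_
      have h1 := (hfac m ℓ).1
      have h2 := (hfac m ℓ).2
      omega
    have h2 : Summable fun ℓ : ℕ => a (2 * (ℓ + 1) * m + k) := by
      refine hsa.comp_injective (StrictMono.injective ?_)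
      refine strictMono_nat_of_lt_succ fun ℓ => ?_
      have h1 := (hfac m ℓ).1
      have h2 := (hfac m ℓ).2
      omega
    exact h1.add h2
  refine ⟨K + 1, fun n hn => ?_⟩
  have hn1 : 1 ≤ n := by omega
  have hnK : K ≤ n := by omega
  -- nonnegativity of each term of the inner sums
  have hterm_nonneg : ∀ (m ℓ k : ℕ), n ≤ m → k ≤ n →
      0 ≤ a (2 * (ℓ + 1) * m - k) + a (2 * (ℓ + 1) * m + k) := by
    intro m ℓ k hm hk
    have h1 := (hfac m ℓ).1
    have := hpos' (2 * (ℓ + 1) * m - k) (by omega)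
    have := hpos' (2 * (ℓ + 1) * m + k) (by omega)
    linarith
  -- RHS tsum is nonneg, and its abs equals itself
  have hRHS_nonneg : (0:ℝ) ≤ ∑ k ∈ Finset.range (n + 1), ∑' ℓ : ℕ,
      (a (2 * (ℓ + 1) * n - k) + a (2 * (ℓ + 1) * n + k)) := by
    refine Finset.sum_nonneg fun k hk => ?_
    have hk' : k ≤ n := by have := Finset.mem_range.mp hk; omega
    exact tsum_nonneg fun ℓ => hterm_nonneg n ℓ k le_rfl hk'
  rw [abs_of_nonneg hRHS_nonneg]
  -- LHS inner sums: rewrite sign and bound by alternating series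
  have hLHS_inner : ∀ k ≤ n,
      0 ≤ (∑' ℓ : ℕ, (-1 : ℝ) ^ (ℓ + 1 + 1) *
          (a (2 * (ℓ + 1) * (n + 1) - k) + a (2 * (ℓ + 1) * (n + 1) + k))) ∧
      (∑' ℓ : ℕ, (-1 : ℝ) ^ (ℓ + 1 + 1) *
          (a (2 * (ℓ + 1) * (n + 1) - k) + a (2 * (ℓ + 1) * (n + 1) + k))) ≤
        a (2 * (n + 1) - k) + a (2 * (n + 1) + k) := by
    intro k hk
    set b : ℕ → ℝ := fun ℓ => a (2 * (ℓ + 1) * (n + 1) - k) + a (2 * (ℓ + 1) * (n + 1) + k)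
      with hb
    have hb0 : ∀ ℓ, 0 ≤ b ℓ := fun ℓ => hterm_nonneg (n + 1) ℓ k (by omega) hk
    have hbm : ∀ ℓ, b (ℓ + 1) ≤ b ℓ := by
      intro ℓ
      have h1 := (hfac (n + 1) ℓ).1
      have h2 := (hfac (n + 1) ℓ).2
      have ha1 : a (2 * (ℓ + 1 + 1) * (n + 1) - k) ≤ a (2 * (ℓ + 1) * (n + 1) - k) := by
        refine hanti _ _ (by omega) (by omega)
      have ha2 : a (2 * (ℓ + 1 + 1) * (n + 1) + k) ≤ a (2 * (ℓ + 1) * (n + 1) + k) := by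
        refine hanti _ _ (by omega) (by omega)
      simp only [hb]
      linarith
    have hbs : Summable b := hsub (n + 1) k (by omega) (by omega)
    have hrw : (∑' ℓ : ℕ, (-1 : ℝ) ^ (ℓ + 1 + 1) *
          (a (2 * (ℓ + 1) * (n + 1) - k) + a (2 * (ℓ + 1) * (n + 1) + k)))
        = ∑' ℓ : ℕ, (-1 : ℝ) ^ ℓ * b ℓ := by
      refine tsum_congr fun ℓ => ?_
      have : (-1 : ℝ) ^ (ℓ + 1 + 1) = (-1 : ℝ) ^ ℓ := by
        rw [pow_succ, pow_succ]; ring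
      rw [this]
    have hbounds := alt_tsum_bounds hb0 hbm hbs
    have hb0val : b 0 = a (2 * (n + 1) - k) + a (2 * (n + 1) + k) := by
      simp only [hb]
    rw [hrw]
    exact ⟨hbounds.1, by rw [← hb0val]; exact hbounds.2⟩
  -- chain of inequalities
  calc |∑ k ∈ Finset.range (n + 1), ∑' ℓ : ℕ, (-1 : ℝ) ^ (ℓ + 1 + 1) *
          (a (2 * (ℓ + 1) * (n + 1) - k) + a (2 * (ℓ + 1) * (n + 1) + k))|
      ≤ ∑ k ∈ Finset.range (n + 1), |∑' ℓ : ℕ, (-1 : ℝ) ^ (ℓ + 1 + 1) *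
          (a (2 * (ℓ + 1) * (n + 1) - k) + a (2 * (ℓ + 1) * (n + 1) + k))| :=
        Finset.abs_sum_le_sum_abs _ _
    _ ≤ ∑ k ∈ Finset.range (n + 1), (a (2 * (n + 1) - k) + a (2 * (n + 1) + k)) := by
        refine Finset.sum_le_sum fun k hk => ?_
        have hk' : k ≤ n := by have := Finset.mem_range.mp hk; omega
        obtain ⟨h1, h2⟩ := hLHS_inner k hk'
        rw [abs_of_nonneg h1]; exact h2
    _ ≤ ∑ k ∈ Finset.range (n + 1), (a (2 * n - k) + a (2 * n + k)) := by
        refine Finset.sum_le_sum fun k hk => ?_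
        have hk' : k ≤ n := by have := Finset.mem_range.mp hk; omega
        have ha1 : a (2 * (n + 1) - k) ≤ a (2 * n - k) :=
          hanti _ _ (by omega) (by omega)
        have ha2 : a (2 * (n + 1) + k) ≤ a (2 * n + k) :=
          hanti _ _ (by omega) (by omega)
        linarith
    _ ≤ ∑ k ∈ Finset.range (n + 1), ∑' ℓ : ℕ,
          (a (2 * (ℓ + 1) * n - k) + a (2 * (ℓ + 1) * n + k)) := by
        refine Finset.sum_le_sum fun k hk => ?_
        have hk' : k ≤ n := by have := Finset.mem_range.mp hk; omega
        have hle := Summable.le_tsum (hsub n k hn1 hk') 0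
          (fun j _ => hterm_nonneg n j k le_rfl hk')
        have h0 : 2 * (0 + 1) * n = 2 * n := by ring
        rw [h0] at hle
        exact hle
end

section
/- Let f be continuous on [-1,1] with degree-n Chebyshev truncation f_n (partial sum of its Chebyshev series) and best uniform polynomial approximation p_n* of degree n, for n > 1. Then ‖f - f_n‖_∞ ≤ (4 + (4/π²) ln n) ‖f - p_n*‖_∞. -/
/-!
Substituting `x = cos θ` turns the Chebyshev partial sum `S_n f` into the Fourier partial sum of
the even function `θ ↦ f (cos θ)`, i.e. into its convolution with the Dirichlet kernel
`D_n(u) = 1 + 2 ∑_{k ≤ n} cos (k u) = sin ((n + 1/2) u) / sin (u / 2)`. Hence `S_n` has norm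
at most the Lebesgue constant `Λ_n = π⁻¹ ∫_0^π |D_n|`, and by orthogonality of the `T_k` it fixes
the polynomials of degree `≤ n`. For any such `p`, `f - S_n f = (f - p) - S_n (f - p)`, so
`‖f - S_n f‖ ≤ (1 + Λ_n) ‖f - p‖`.

For the Lebesgue constant, `|D_n(u)| ≤ 2 |sin ((n + 1/2) u)| / u + π² / 24`, and after the
substitution `v = (n + 1/2) u` the integral `∫ |sin v| / v` is cut into periods of length `π`:
the first contributes at most `π`, the `k`-th at most `2 / (k π)`, and the harmonic sum gives
`Λ_n ≤ 2 + 4/π² + π²/24 + (4/π²) log n ≤ 3 + (4/π²) log n`.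
-/

open Real MeasureTheory intervalIntegral Set Polynomial.Chebyshev

noncomputable def dirichletKernel (n : ℕ) (u : ℝ) : ℝ :=
  1 + 2 * ∑ k ∈ Finset.Icc 1 n, cos (k * u)

noncomputable def lebesgueConstant (n : ℕ) : ℝ := π⁻¹ * ∫ u in 0..π, |dirichletKernel n u|

namespace dirichletKernel

@[fun_prop]
theorem continuous (n : ℕ) : Continuous (dirichletKernel n) := by
  unfold dirichletKernel; fun_prop

theorem even (n : ℕ) : Function.Even (dirichletKernel n) := fun u ↦ by
  simp only [dirichletKernel, mul_neg, cos_neg]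

theorem periodic (n : ℕ) : Function.Periodic (dirichletKernel n) (2 * π) := fun u ↦ by
  simp only [dirichletKernel, mul_add]
  congr 2
  refine Finset.sum_congr rfl fun k _ ↦ ?_
  exact_mod_cast cos_add_nat_mul_two_pi (k * u) k

theorem sin_half_mul (n : ℕ) (u : ℝ) :
    sin (u / 2) * dirichletKernel n u = sin ((n + 1 / 2) * u) := by
  induction n with
  | zero => simp [dirichletKernel]; ring_nf
  | succ n ih =>
    have hsplit : dirichletKernel (n + 1) u = dirichletKernel n u + 2 * cos ((n + 1) * u) := by
      simp only [dirichletKernel, Finset.sum_Icc_succ_top (by omega : 1 ≤ n + 1)]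
      push_cast; ring
    rw [hsplit, mul_add, ih]
    have h₁ : ((n + 1 : ℕ) + 1 / 2) * u = (n + 1) * u + u / 2 := by push_cast; ring
    have h₂ : (n + 1 / 2) * u = (n + 1) * u - u / 2 := by ring
    rw [h₁, h₂, sin_add, sin_sub]
    ring

theorem sub_add_add (n : ℕ) (θ t : ℝ) :
    dirichletKernel n (θ - t) + dirichletKernel n (θ + t)
      = 2 + 4 * ∑ k ∈ Finset.Icc 1 n, cos (k * θ) * cos (k * t) := by
  simp only [dirichletKernel, mul_sub, mul_add, cos_sub, cos_add, Finset.sum_add_distrib,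
    Finset.sum_sub_distrib]
  ring

end dirichletKernel

theorem inv_sin_sub_inv_le {x : ℝ} (hx₀ : 0 < x) (hx : x ≤ π / 2) :
    (sin x)⁻¹ - x⁻¹ ≤ π * x / 12 := by
  have hjordan : 2 / π * x ≤ sin x := mul_le_sin hx₀.le hx
  have hsin : 0 < sin x := lt_of_lt_of_le (by positivity) hjordan
  have htaylor : x - sin x ≤ x ^ 3 / 6 := by linarith [sin_ge_sub_cube hx₀.le]
  rw [inv_sub_inv hsin.ne' hx₀.ne', div_le_div_iff₀ (by positivity) (by positivity)]
  calc (x - sin x) * 12 ≤ x ^ 3 / 6 * 12 := by gcongr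
    _ = π * x * (x * (2 / π * x)) := by field_simp; ring
    _ ≤ π * x * (sin x * x) := by rw [mul_comm (sin x)]; gcongr

theorem abs_dirichletKernel_le (n : ℕ) {u : ℝ} (hu₀ : 0 < u) (hu : u ≤ π) :
    |dirichletKernel n u| ≤ 2 * |sin ((n + 1 / 2) * u)| / u + π ^ 2 / 24 := by
  have hsin : 0 < sin (u / 2) := sin_pos_of_pos_of_lt_pi (by positivity) (by linarith [pi_pos])
  have hinv : (sin (u / 2))⁻¹ ≤ 2 / u + π ^ 2 / 24 := by
    have := inv_sin_sub_inv_le (half_pos hu₀) (by linarith)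
    have : π * (u / 2) / 12 ≤ π ^ 2 / 24 := by nlinarith [pi_pos]
    rw [inv_div] at *; linarith
  have hD : dirichletKernel n u = sin ((n + 1 / 2) * u) * (sin (u / 2))⁻¹ := by
    rw [← dirichletKernel.sin_half_mul]; field_simp
  have hs := abs_sin_le_one ((n + 1 / 2) * u)
  rw [hD, abs_mul, abs_inv, abs_of_pos hsin]
  calc |sin ((n + 1 / 2) * u)| * (sin (u / 2))⁻¹
      ≤ |sin ((n + 1 / 2) * u)| * (2 / u + π ^ 2 / 24) := by gcongr
    _ = 2 * |sin ((n + 1 / 2) * u)| / u + |sin ((n + 1 / 2) * u)| * (π ^ 2 / 24) := by ring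
    _ ≤ 2 * |sin ((n + 1 / 2) * u)| / u + π ^ 2 / 24 := by
      gcongr; exact mul_le_of_le_one_left (by positivity) hs

theorem intervalIntegrable_abs_sin_mul_div (c a b : ℝ) :
    IntervalIntegrable (fun u ↦ |sin (c * u)| / u) volume a b := by
  rw [intervalIntegrable_iff]
  refine Measure.integrableOn_of_bounded (M := |c|) measure_Ioc_lt_top.ne
    (Measurable.aestronglyMeasurable (by fun_prop)) (ae_of_all _ fun u ↦ ?_)
  rcases eq_or_ne u 0 with rfl | hu
  · simp
  rw [norm_div, Real.norm_eq_abs, Real.norm_eq_abs, abs_abs, div_le_iff₀ (abs_pos.2 hu),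
    ← abs_mul]
  exact abs_sin_le_abs

theorem intervalIntegrable_abs_sin_div (a b : ℝ) :
    IntervalIntegrable (fun v ↦ |sin v| / v) volume a b := by
  simpa using intervalIntegrable_abs_sin_mul_div 1 a b

theorem integral_abs_sin_nat_mul_pi (k : ℕ) : ∫ v in k * π..(k + 1) * π, |sin v| = 2 := by
  have hper : Function.Periodic (fun v ↦ |sin v|) π := fun v ↦ by simp [sin_add_pi]
  rw [add_one_mul, hper.intervalIntegral_add_eq _ 0, zero_add,
    integral_congr fun v hv ↦ abs_of_nonneg (sin_nonneg_of_nonneg_of_le_pi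
      (by simpa [pi_pos.le] using hv.1) (by simpa [pi_pos.le] using hv.2)), integral_sin]
  norm_num

theorem integral_abs_sin_div_nat_mul_pi_le {k : ℕ} (hk : 0 < k) :
    ∫ v in k * π..(k + 1) * π, |sin v| / v ≤ 2 / (k * π) := by
  have hkπ : 0 < (k : ℝ) * π := by positivity
  calc ∫ v in k * π..(k + 1) * π, |sin v| / v
      ≤ ∫ v in k * π..(k + 1) * π, |sin v| / (k * π) := by
        refine integral_mono_on (by nlinarith [pi_pos]) (intervalIntegrable_abs_sin_div _ _)
          ((by fun_prop : Continuous _).intervalIntegrable _ _) fun v hv ↦ ?_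
        gcongr
        exact hv.1
    _ = 2 / (k * π) := by rw [intervalIntegral.integral_div, integral_abs_sin_nat_mul_pi]

theorem integral_abs_sin_div_le (n : ℕ) :
    ∫ v in 0..(n + 1) * π, |sin v| / v ≤ π + 2 / π * (1 + log n) := by
  have hsum := sum_integral_adjacent_intervals (a := fun k : ℕ ↦ k * π) (n := n + 1)
    (fun k _ ↦ intervalIntegrable_abs_sin_div _ _) (μ := volume)
  push_cast at hsum
  rw [zero_mul] at hsum
  rw [← hsum, Finset.sum_range_succ']
  have hfirst : ∫ v in (0 : ℝ)..π, |sin v| / v ≤ π := by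
    have := integral_mono_on pi_pos.le (intervalIntegrable_abs_sin_div 0 π)
      intervalIntegrable_const fun v _ ↦ (le_abs_self _).trans (by
        rw [abs_div, abs_abs]; exact div_le_one_of_le₀ abs_sin_le_abs (abs_nonneg _))
    simpa using this
  have hrest : ∑ k ∈ Finset.range n, ∫ v in (k + 1 : ℝ) * π..(k + 1 + 1) * π, |sin v| / v
      ≤ 2 / π * (1 + log n) := by
    calc _ ≤ ∑ k ∈ Finset.range n, 2 / ((k + 1 : ℕ) * π) :=
          Finset.sum_le_sum fun k _ ↦ by
            exact_mod_cast integral_abs_sin_div_nat_mul_pi_le k.succ_pos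
      _ = 2 / π * harmonic n := by
          simp only [harmonic, Rat.cast_sum, Finset.mul_sum]
          refine Finset.sum_congr rfl fun k _ ↦ ?_
          push_cast; field_simp
      _ ≤ 2 / π * (1 + log n) := by gcongr; exact harmonic_le_one_add_log n
  simp only [Nat.cast_add, Nat.cast_one, Nat.cast_zero, zero_mul, zero_add, one_mul]
  linarith

theorem integral_abs_sin_mul_div {N : ℝ} (hN : 0 < N) :
    ∫ u in 0..π, |sin (N * u)| / u = ∫ v in 0..N * π, |sin v| / v := by
  have hscale : ∀ u, |sin (N * u)| / u = N * (|sin (N * u)| / (N * u)) := fun u ↦ by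
    rw [← mul_div_assoc, mul_div_mul_left _ _ hN.ne']
  simp_rw [hscale]
  rw [intervalIntegral.integral_const_mul,
    intervalIntegral.integral_comp_mul_left (fun v ↦ |sin v| / v) hN.ne', smul_eq_mul,
    mul_inv_cancel_left₀ hN.ne', mul_zero]

theorem lebesgueConstant_le (n : ℕ) : lebesgueConstant n ≤ 3 + 4 / π ^ 2 * log n := by
  set N : ℝ := n + 1 / 2 with hN_def
  have hN : 0 < N := by positivity
  have hsinc : ∫ u in 0..π, |sin (N * u)| / u ≤ π + 2 / π * (1 + log n) := calc
    _ = ∫ v in 0..N * π, |sin v| / v := integral_abs_sin_mul_div hN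
    _ ≤ ∫ v in 0..(n + 1) * π, |sin v| / v :=
      integral_mono_interval le_rfl (by positivity) (by gcongr; linarith)
        (ae_restrict_of_forall_mem measurableSet_Ioc fun v hv ↦ div_nonneg (abs_nonneg _) hv.1.le)
        (intervalIntegrable_abs_sin_div _ _)
    _ ≤ π + 2 / π * (1 + log n) := integral_abs_sin_div_le n
  have hkernel : ∫ u in 0..π, |dirichletKernel n u|
      ≤ 2 * (∫ u in 0..π, |sin (N * u)| / u) + π * (π ^ 2 / 24) := calc
    _ ≤ ∫ u in 0..π, (2 * (|sin (N * u)| / u) + π ^ 2 / 24) := by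
      refine integral_mono_on_of_le_Ioo pi_pos.le
        ((dirichletKernel.continuous n).abs.intervalIntegrable _ _)
        (((intervalIntegrable_abs_sin_mul_div N _ _).const_mul 2).add intervalIntegrable_const)
        fun u hu ↦ ?_
      rw [← mul_div_assoc]
      exact abs_dirichletKernel_le n hu.1 hu.2.le
    _ = _ := by
      rw [intervalIntegral.integral_add ((intervalIntegrable_abs_sin_mul_div N _ _).const_mul 2)
        intervalIntegrable_const, intervalIntegral.integral_const_mul,
        intervalIntegral.integral_const, smul_eq_mul, sub_zero]
  have hπ : 4 / π ^ 2 + π ^ 2 / 24 ≤ 1 := by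
    have h₁ : 4 / π ^ 2 ≤ 4 / 9 := by gcongr; nlinarith [pi_gt_three]
    have h₂ : π ^ 2 ≤ 9.93 := by nlinarith [pi_lt_d2, pi_pos]
    linarith
  calc lebesgueConstant n
      ≤ π⁻¹ * (2 * (π + 2 / π * (1 + log n)) + π * (π ^ 2 / 24)) := by
        unfold lebesgueConstant
        gcongr
        exact hkernel.trans (by gcongr)
    _ = 2 + (4 / π ^ 2 + π ^ 2 / 24) + 4 / π ^ 2 * log n := by field_simp; ring
    _ ≤ 3 + 4 / π ^ 2 * log n := by linarith

theorem Function.Periodic.integral_comp_sub_add_comp_add {h : ℝ → ℝ} {c : ℝ}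
    (hper : h.Periodic (2 * c)) (heven : h.Even) (hc : Continuous h) (θ : ℝ) :
    ∫ t in 0..c, (h (θ - t) + h (θ + t)) = 2 * ∫ t in 0..c, h t := by
  have hi : ∀ a b, IntervalIntegrable h volume a b := hc.intervalIntegrable
  have hneg : ∫ t in -c..0, h t = ∫ t in 0..c, h t := by
    simpa [heven _] using (integral_comp_neg (a := 0) (b := c) h).symm
  rw [intervalIntegral.integral_add (f := fun t ↦ h (θ - t)) (g := fun t ↦ h (θ + t))
      ((hc.comp (by fun_prop)).intervalIntegrable _ _)
      ((hc.comp (by fun_prop)).intervalIntegrable _ _),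
    integral_comp_sub_left, integral_comp_add_left, sub_zero, add_zero,
    integral_add_adjacent_intervals (hi _ _) (hi _ _),
    show θ + c = θ - c + 2 * c by ring, hper.intervalIntegral_add_eq (θ - c) (-c),
    show -c + 2 * c = c by ring, ← integral_add_adjacent_intervals (hi _ 0) (hi 0 _), hneg]
  ring

theorem IsCompact.le_ciSup_of_continuousOn {α : Type*} [TopologicalSpace α] {g : α → ℝ}
    {s : Set α} (hs : IsCompact s) (hg : ContinuousOn g s) {y : α} (hy : y ∈ s) :
    g y ≤ ⨆ x : s, g x := by
  have : CompactSpace s := isCompact_iff_compactSpace.1 hs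
  exact le_ciSup (isCompact_range hg.domRestrict).bddAbove ⟨y, hy⟩

theorem ContinuousOn.continuous_comp_cos {f : ℝ → ℝ} (hf : ContinuousOn f (Icc (-1) 1)) :
    Continuous fun t ↦ f (cos t) :=
  hf.comp_continuous continuous_cos fun t ↦ ⟨neg_one_le_cos t, cos_le_one t⟩

namespace Polynomial.Chebyshev

noncomputable def seriesCoeff (f : ℝ → ℝ) (k : ℕ) : ℝ :=
  2 / π * ∫ x, f x * (T ℝ k).eval x ∂measureT

noncomputable def partialSum (f : ℝ → ℝ) (n : ℕ) (x : ℝ) : ℝ :=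
  seriesCoeff f 0 / 2 + ∑ k ∈ Finset.Icc 1 n, seriesCoeff f k * (T ℝ k).eval x

theorem seriesCoeff_eq_integral_div_sqrt (f : ℝ → ℝ) (k : ℕ) :
    seriesCoeff f k = 2 / π * ∫ x in -1..1, f x * (T ℝ k).eval x / √(1 - x ^ 2) := by
  rw [seriesCoeff, integral_measureT]
  simp_rw [sqrt_inv, div_eq_mul_inv]

theorem seriesCoeff_eq_integral_cos (f : ℝ → ℝ) (k : ℕ) :
    seriesCoeff f k = 2 / π * ∫ t in 0..π, f (cos t) * cos (k * t) := by
  simp [seriesCoeff, integral_measureT_eq_integral_cos, T_real_cos]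

section Linearity

variable {f g : ℝ → ℝ} (hf : ContinuousOn f (Icc (-1) 1)) (hg : ContinuousOn g (Icc (-1) 1))
include hf hg

theorem seriesCoeff_add (k : ℕ) :
    seriesCoeff (fun x ↦ f x + g x) k = seriesCoeff f k + seriesCoeff g k := by
  simp only [seriesCoeff, add_mul]
  rw [integral_add
    (integrable_measureT (f := fun x ↦ f x * (T ℝ k).eval x) (hf.mul (by fun_prop)))
    (integrable_measureT (f := fun x ↦ g x * (T ℝ k).eval x) (hg.mul (by fun_prop))), mul_add]

theorem seriesCoeff_sub (k : ℕ) :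
    seriesCoeff (fun x ↦ f x - g x) k = seriesCoeff f k - seriesCoeff g k := by
  simp only [seriesCoeff, sub_mul]
  rw [integral_sub
    (integrable_measureT (f := fun x ↦ f x * (T ℝ k).eval x) (hf.mul (by fun_prop)))
    (integrable_measureT (f := fun x ↦ g x * (T ℝ k).eval x) (hg.mul (by fun_prop))), mul_sub]

theorem partialSum_add (n : ℕ) (x : ℝ) :
    partialSum (fun x ↦ f x + g x) n x = partialSum f n x + partialSum g n x := by
  simp only [partialSum, seriesCoeff_add hf hg, add_mul, Finset.sum_add_distrib]
  ring

theorem partialSum_sub (n : ℕ) (x : ℝ) :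
    partialSum (fun x ↦ f x - g x) n x = partialSum f n x - partialSum g n x := by
  simp only [partialSum, seriesCoeff_sub hf hg, sub_mul, Finset.sum_sub_distrib]
  ring

end Linearity

theorem seriesCoeff_const_mul (c : ℝ) (f : ℝ → ℝ) (k : ℕ) :
    seriesCoeff (fun x ↦ c * f x) k = c * seriesCoeff f k := by
  simp only [seriesCoeff, mul_assoc, MeasureTheory.integral_const_mul]
  ring

theorem partialSum_const_mul (c : ℝ) (f : ℝ → ℝ) (n : ℕ) (x : ℝ) :
    partialSum (fun x ↦ c * f x) n x = c * partialSum f n x := by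
  simp only [partialSum, seriesCoeff_const_mul, mul_add, Finset.mul_sum, mul_assoc]
  ring

theorem seriesCoeff_T (m k : ℕ) :
    seriesCoeff (fun x ↦ (T ℝ m).eval x) k = if m = k then (if m = 0 then 2 else 1) else 0 := by
  rw [seriesCoeff]
  split_ifs with hmk hm
  · subst hmk hm; rw [Nat.cast_zero, integral_eval_T_real_mul_self_measureT_zero]; field_simp
  · subst hmk; rw [integral_T_real_mul_self_measureT_of_ne_zero hm]; field_simp
  · rw [integral_eval_T_real_mul_eval_T_real_measureT_of_ne hmk, mul_zero]

theorem partialSum_T {m n : ℕ} (hm : m ≤ n) (x : ℝ) :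
    partialSum (fun x ↦ (T ℝ m).eval x) n x = (T ℝ m).eval x := by
  simp only [partialSum, seriesCoeff_T]
  rcases eq_or_ne m 0 with rfl | hm₀ <;>
    simp [ite_mul, Finset.sum_ite_eq, *, Nat.one_le_iff_ne_zero]

theorem partialSum_eval_of_degree_le {p : ℝ[X]} {n : ℕ} (hp : p.degree ≤ n) (x : ℝ) :
    partialSum (fun y ↦ p.eval y) n x = p.eval x := by
  let S : Polynomial.Sequence ℝ := ⟨fun i ↦ T ℝ i, fun i ↦ by simp⟩
  have hspan : p ∈ Submodule.span ℝ (S '' Iic n) := by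
    rw [S.span_degreeLE fun i _ ↦ by simp [S]]
    exact mem_degreeLE.2 hp
  clear hp
  induction hspan using Submodule.span_induction with
  | mem q hq =>
    obtain ⟨m, hm, rfl⟩ := hq
    exact partialSum_T hm x
  | zero => simp [partialSum, seriesCoeff]
  | add q r _ _ hq hr =>
    simp only [eval_add]
    rw [partialSum_add q.continuousOn r.continuousOn, hq, hr]
  | smul c q _ hq =>
    simp only [eval_smul, smul_eq_mul]
    rw [partialSum_const_mul, hq]

theorem partialSum_cos_eq_integral {f : ℝ → ℝ} (hf : ContinuousOn f (Icc (-1) 1)) (n : ℕ)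
    (θ : ℝ) :
    partialSum f n (cos θ) = (2 * π)⁻¹ *
      ∫ t in 0..π, f (cos t) * (dirichletKernel n (θ - t) + dirichletKernel n (θ + t)) := by
  have hF := hf.continuous_comp_cos
  have hexpand : ∀ t, f (cos t) * (dirichletKernel n (θ - t) + dirichletKernel n (θ + t))
      = 2 * f (cos t) + ∑ k ∈ Finset.Icc 1 n, 4 * cos (k * θ) * (f (cos t) * cos (k * t)) := by
    intro t
    rw [dirichletKernel.sub_add_add, Finset.mul_sum, mul_add, Finset.mul_sum]
    congr 1
    · ring
    · exact Finset.sum_congr rfl fun k _ ↦ by ring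
  simp_rw [hexpand]
  rw [intervalIntegral.integral_add, intervalIntegral.integral_finsetSum]
  rotate_left
  · exact fun k _ ↦ (continuous_const.mul (hF.mul (by fun_prop))).intervalIntegrable _ _
  · exact (hF.const_mul 2).intervalIntegrable _ _
  · exact (continuous_finsetSum _ fun k _ ↦
      continuous_const.mul (hF.mul (by fun_prop))).intervalIntegrable _ _
  simp only [intervalIntegral.integral_const_mul, partialSum, seriesCoeff_eq_integral_cos,
    T_real_cos, Int.cast_natCast, Nat.cast_zero, zero_mul, cos_zero, mul_one, Finset.mul_sum,
    mul_add]
  congr 1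
  · field_simp
  · exact Finset.sum_congr rfl fun k _ ↦ by field_simp; ring

theorem abs_partialSum_le {f : ℝ → ℝ} {M : ℝ} (hf : ContinuousOn f (Icc (-1) 1))
    (hM : ∀ y ∈ Icc (-1) 1, |f y| ≤ M) (n : ℕ) {x : ℝ} (hx : x ∈ Icc (-1) 1) :
    |partialSum f n x| ≤ M * lebesgueConstant n := by
  have hM₀ : 0 ≤ M := (abs_nonneg _).trans (hM 0 (by norm_num))
  set θ := arccos x
  have hsym := Function.Periodic.integral_comp_sub_add_comp_add
    (h := fun u ↦ |dirichletKernel n u|) (c := π)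
    (fun u ↦ by simp only [dirichletKernel.periodic n u])
    (fun u ↦ by simp only [dirichletKernel.even n u]) (by fun_prop) θ
  rw [← cos_arccos hx.1 hx.2, partialSum_cos_eq_integral hf, abs_mul,
    abs_of_pos (by positivity : (0 : ℝ) < (2 * π)⁻¹)]
  calc (2 * π)⁻¹ *
        |∫ t in 0..π, f (cos t) * (dirichletKernel n (θ - t) + dirichletKernel n (θ + t))|
      ≤ (2 * π)⁻¹ *
        ∫ t in 0..π, M * (|dirichletKernel n (θ - t)| + |dirichletKernel n (θ + t)|) := by
        gcongr
        refine (abs_integral_le_integral_abs pi_pos.le).trans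
          (integral_mono_on pi_pos.le ?_ ?_ fun t _ ↦ ?_)
        · exact (hf.continuous_comp_cos.mul (by fun_prop)).abs.intervalIntegrable _ _
        · exact (by fun_prop : Continuous _).intervalIntegrable _ _
        · rw [abs_mul]
          exact mul_le_mul (hM _ ⟨neg_one_le_cos t, cos_le_one t⟩) (abs_add_le _ _)
            (abs_nonneg _) hM₀
    _ = M * lebesgueConstant n := by
      rw [intervalIntegral.integral_const_mul, hsym, lebesgueConstant]
      field_simp

theorem abs_sub_partialSum_le {f : ℝ → ℝ} {p : ℝ[X]} {n : ℕ} {M : ℝ}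
    (hf : ContinuousOn f (Icc (-1) 1)) (hp : p.degree ≤ n)
    (hM : ∀ y ∈ Icc (-1) 1, |f y - p.eval y| ≤ M) {x : ℝ} (hx : x ∈ Icc (-1) 1) :
    |f x - partialSum f n x| ≤ (1 + lebesgueConstant n) * M := by
  have hsplit : f x - partialSum f n x
      = (f x - p.eval x) - partialSum (fun y ↦ f y - p.eval y) n x := by
    rw [partialSum_sub hf p.continuousOn, partialSum_eval_of_degree_le hp]
    ring
  calc |f x - partialSum f n x|
      ≤ |f x - p.eval x| + |partialSum (fun y ↦ f y - p.eval y) n x| := by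
        rw [hsplit]; exact abs_sub _ _
    _ ≤ M + M * lebesgueConstant n :=
        add_le_add (hM x hx) (abs_partialSum_le (hf.sub p.continuousOn) hM n hx)
    _ = (1 + lebesgueConstant n) * M := by ring

end Polynomial.Chebyshev

theorem chebyshev_truncation_near_best_general (f : ℝ → ℝ)
    (hf : ContinuousOn f (Set.Icc (-1 : ℝ) 1)) (n : ℕ)
    (a : ℕ → ℝ)
    (ha : ∀ k, a k = (2 / π) * ∫ x in (-1 : ℝ)..1,
      f x * (Polynomial.Chebyshev.T ℝ k).eval x / Real.sqrt (1 - x ^ 2))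
    (p : Polynomial ℝ) (hpdeg : p.degree ≤ n) :
    (⨆ x : Set.Icc (-1 : ℝ) 1,
        |f x - (a 0 / 2 + ∑ k ∈ Finset.Icc 1 n,
          a k * (Polynomial.Chebyshev.T ℝ k).eval (x : ℝ))|) ≤
      (4 + (4 / π ^ 2) * Real.log n) * ⨆ x : Set.Icc (-1 : ℝ) 1, |f x - p.eval (x : ℝ)| := by
  obtain rfl : a = seriesCoeff f :=
    funext fun k ↦ (ha k).trans (seriesCoeff_eq_integral_div_sqrt f k).symm
  set E := ⨆ x : Set.Icc (-1 : ℝ) 1, |f x - p.eval (x : ℝ)|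
  have hE : ∀ y ∈ Icc (-1) 1, |f y - p.eval y| ≤ E := fun y hy ↦
    isCompact_Icc.le_ciSup_of_continuousOn (hf.sub p.continuousOn).abs hy
  have hE₀ : 0 ≤ E := (abs_nonneg _).trans (hE 0 (by norm_num))
  have : Nonempty (Icc (-1 : ℝ) 1) := ⟨⟨0, by norm_num⟩⟩
  refine ciSup_le fun x ↦ ?_
  calc |f x - partialSum f n x| ≤ (1 + lebesgueConstant n) * E :=
        abs_sub_partialSum_le hf hpdeg hE x.2
    _ ≤ (4 + 4 / π ^ 2 * log n) * E :=
        mul_le_mul_of_nonneg_right (by linarith [lebesgueConstant_le n]) hE₀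

/-- Chebyshev truncation is near-best: for `f` continuous on `[-1,1]` with
degree-`n` Chebyshev truncation `f_n` and best uniform approximation `p_n^*` of
degree `n`, `‖f - f_n‖_∞ ≤ (4 + (4/π²) ln n) ‖f - p_n^*‖_∞` for `n > 1`. -/
theorem chebyshev_truncation_near_best (f : ℝ → ℝ)
    (hf : ContinuousOn f (Set.Icc (-1 : ℝ) 1)) (n : ℕ) (hn : 1 < n)
    (a : ℕ → ℝ)
    (ha : ∀ k, a k = (2 / π) * ∫ x in (-1 : ℝ)..1,
      f x * (Polynomial.Chebyshev.T ℝ k).eval x / Real.sqrt (1 - x ^ 2))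
    (p : Polynomial ℝ) (hpdeg : p.degree ≤ n)
    (hbest : ∀ q : Polynomial ℝ, q.degree ≤ n →
      (⨆ x : Set.Icc (-1 : ℝ) 1, |f x - p.eval (x : ℝ)|) ≤
        ⨆ x : Set.Icc (-1 : ℝ) 1, |f x - q.eval (x : ℝ)|) :
    (⨆ x : Set.Icc (-1 : ℝ) 1,
        |f x - (a 0 / 2 + ∑ k ∈ Finset.Icc 1 n,
          a k * (Polynomial.Chebyshev.T ℝ k).eval (x : ℝ))|) ≤
      (4 + (4 / π ^ 2) * Real.log n) * ⨆ x : Set.Icc (-1 : ℝ) 1, |f x - p.eval (x : ℝ)| :=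
  chebyshev_truncation_near_best_general f hf n a ha p hpdeg
end

section
/- For ν > 0 and t ∈ ℝ with t mod 2π ≠ 0, as n → ∞: Σ_{k=n+1}^{∞} cos(kt)/k^{ν+1} = -D_n(t) n^{-ν-1} + O(n^{-ν-2}), where D_n(t) = sin((2n+1)t/2)/(2 sin(t/2)) is the Dirichlet kernel. -/
/-!
Write `S m = sin ((2m+1)t/2)`, `C m = cos (mt)`, `a m = m^(-p)` with `p = ν + 1`, and
`b m = a m - a (m+1)`. The identities `S (m+1) - S m = 2 sin (t/2) C (m+1)` and
`C m - C (m+1) = 2 sin (t/2) S m` make two Abel summations possible. The first turns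
`2 sin (t/2) ∑_{m>n} C m a m` into `-S n a (n+1) + ∑_{m>n} S m b m`, so the tail plus
`S n a n / (2 sin (t/2))` equals `(S n b n + ∑_{m>n} S m b m) / (2 sin (t/2))`. The second, using
that `b` is nonnegative and decreasing, bounds `∑_{m>n} S m b m` by `b (n+1) / |sin (t/2)|`.
Finally `b n ≤ p n^(-p-1)` by the mean value theorem.
-/

open Real Filter Asymptotics Topology Set

theorem tsum_sub_mul_eq_neg_add_tsum {R : Type*} [Ring R] [TopologicalSpace R]
    [IsTopologicalRing R] [T2Space R] (u v : ℕ → R)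
    (h₁ : Summable fun k => u (k + 1) * v k) (h₂ : Summable fun k => u k * v k) :
    ∑' k, (u (k + 1) - u k) * v k = -(u 0 * v 0) + ∑' k, u (k + 1) * (v k - v (k + 1)) := by
  have h₃ : Summable fun k => u (k + 1) * v (k + 1) := (summable_nat_add_iff 1).2 h₂
  simp_rw [sub_mul, mul_sub]
  rw [h₁.tsum_sub h₂, h₁.tsum_sub h₃, h₂.tsum_eq_zero_add]
  abel

theorem Antitone.hasSum_sub_succ {v : ℕ → ℝ} {l : ℝ} (hv : Antitone v)
    (hl : Tendsto v atTop (𝓝 l)) : HasSum (fun k => v k - v (k + 1)) (v 0 - l) := by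
  refine (hasSum_iff_tendsto_nat_of_nonneg (fun k => sub_nonneg.2 (hv k.le_succ)) _).2 ?_
  simp_rw [Finset.sum_range_sub']
  exact tendsto_const_nhds.sub hl

theorem Summable.mul_of_abs_le {u v : ℕ → ℝ} {M : ℝ} (hu : ∀ k, |u k| ≤ M)
    (hv : Summable v) : Summable fun k => u k * v k :=
  (hv.abs.mul_left M).of_norm_bounded fun k => by
    rw [Real.norm_eq_abs, abs_mul]
    exact mul_le_mul_of_nonneg_right (hu k) (abs_nonneg _)

theorem abs_tsum_sub_mul_le_of_antitone {u v : ℕ → ℝ} {M : ℝ} (hu : ∀ k, |u k| ≤ M)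
    (hv : Antitone v) (hvs : Summable v) :
    |∑' k, (u (k + 1) - u k) * v k| ≤ 2 * M * v 0 := by
  have hv0 : ∀ k, 0 ≤ v k := hv.le_of_tendsto hvs.tendsto_atTop_zero
  have htel : HasSum (fun k => M * (v k - v (k + 1))) (M * v 0) := by
    simpa using (hv.hasSum_sub_succ hvs.tendsto_atTop_zero).mul_left M
  have htail : |∑' k, u (k + 1) * (v k - v (k + 1))| ≤ M * v 0 :=
    tsum_of_norm_bounded (f := fun k => u (k + 1) * (v k - v (k + 1))) htel fun k => by
      have hd : 0 ≤ v k - v (k + 1) := sub_nonneg.2 (hv k.le_succ)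
      rw [Real.norm_eq_abs, abs_mul, abs_of_nonneg hd]
      exact mul_le_mul_of_nonneg_right (hu _) hd
  rw [tsum_sub_mul_eq_neg_add_tsum u v (hvs.mul_of_abs_le fun k => hu (k + 1))
    (hvs.mul_of_abs_le hu)]
  calc |-(u 0 * v 0) + ∑' k, u (k + 1) * (v k - v (k + 1))|
      ≤ |u 0 * v 0| + M * v 0 := (abs_add_le _ _).trans (by rw [abs_neg]; gcongr)
    _ ≤ M * v 0 + M * v 0 := by
      rw [abs_mul, abs_of_nonneg (hv0 0)]
      gcongr
      exacts [hv0 0, hu 0]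
    _ = 2 * M * v 0 := by ring

theorem AntitoneOn.nonneg_of_tendsto_zero {f : ℕ → ℝ} {n : ℕ} (hf : AntitoneOn f (Ici n))
    (h : Tendsto f atTop (𝓝 0)) {m : ℕ} (hm : n ≤ m) : 0 ≤ f m := by
  have hshift : Antitone fun k => f (k + n) := fun i j hij => hf (by simp) (by simp) (by omega)
  simpa [Nat.sub_add_cancel hm] using
    hshift.le_of_tendsto (h.comp (tendsto_add_atTop_nat n)) (m - n)

section DirichletTail

variable {S C a : ℕ → ℝ} {s : ℝ}

theorem two_mul_tsum_mul_eq_neg_add_tsum (hS : ∀ m, |S m| ≤ 1)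
    (hSC : ∀ m, S (m + 1) - S m = 2 * s * C (m + 1)) (ha : Summable a) (n : ℕ) :
    2 * s * ∑' k, C (k + n + 1) * a (k + n + 1) =
      -(S n * a (n + 1)) + ∑' k, S (k + n + 1) * (a (k + n + 1) - a (k + n + 2)) := by
  have hv : Summable fun k => a (k + n + 1) := (summable_nat_add_iff (n + 1)).2 ha
  have habel := tsum_sub_mul_eq_neg_add_tsum (fun k => S (k + n)) (fun k => a (k + n + 1))
    (hv.mul_of_abs_le fun _ => hS _) (hv.mul_of_abs_le fun _ => hS _)
  simp only [Nat.add_right_comm _ 1 n, zero_add] at habel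
  rw [← habel, ← tsum_mul_left]
  exact tsum_congr fun k => by rw [hSC]; ring

theorem abs_two_mul_tsum_mul_le (hC : ∀ m, |C m| ≤ 1)
    (hCS : ∀ m, C m - C (m + 1) = 2 * s * S m) (ha : Summable a) {n : ℕ}
    (hb : AntitoneOn (fun m => a m - a (m + 1)) (Ici (n + 1))) :
    |2 * s * ∑' k, S (k + n + 1) * (a (k + n + 1) - a (k + n + 2))| ≤
      2 * (a (n + 1) - a (n + 2)) := by
  have hv : Antitone fun k => a (k + n + 1) - a (k + n + 2) :=
    fun i j hij => hb (by simp) (by simp) (by omega)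
  have hvs : Summable fun k => a (k + n + 1) - a (k + n + 2) :=
    ((summable_nat_add_iff (n + 1)).2 ha).sub ((summable_nat_add_iff (n + 2)).2 ha)
  have hdir := abs_tsum_sub_mul_le_of_antitone (u := fun k => -C (k + n + 1)) (M := 1)
    (fun k => by rw [abs_neg]; exact hC _) hv hvs
  simp only [Nat.add_right_comm _ 1 n, zero_add, mul_one] at hdir
  rw [← tsum_mul_left]
  convert hdir using 2
  exact tsum_congr fun k => by
    linear_combination (a (k + n + 2) - a (k + n + 1)) * hCS (k + n + 1)

theorem abs_tsum_mul_add_div_mul_le (hs : s ≠ 0) (hS : ∀ m, |S m| ≤ 1) (hC : ∀ m, |C m| ≤ 1)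
    (hSC : ∀ m, S (m + 1) - S m = 2 * s * C (m + 1))
    (hCS : ∀ m, C m - C (m + 1) = 2 * s * S m) (ha : Summable a) {n : ℕ}
    (hb : AntitoneOn (fun m => a m - a (m + 1)) (Ici n)) :
    |∑' k, C (k + n + 1) * a (k + n + 1) + S n / (2 * s) * a n| ≤
      (1 + 1 / |s|) / (2 * |s|) * (a n - a (n + 1)) := by
  set U := ∑' k, S (k + n + 1) * (a (k + n + 1) - a (k + n + 2))
  have hA := two_mul_tsum_mul_eq_neg_add_tsum hS hSC ha n
  have hB := abs_two_mul_tsum_mul_le hC hCS ha (hb.mono (Ici_subset_Ici.2 n.le_succ))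
  have hb_lim : Tendsto (fun m => a m - a (m + 1)) atTop (𝓝 0) := by
    simpa using ha.tendsto_atTop_zero.sub (ha.tendsto_atTop_zero.comp (tendsto_add_atTop_nat 1))
  have hb₁ : 0 ≤ a (n + 1) - a (n + 2) := hb.nonneg_of_tendsto_zero hb_lim n.le_succ
  have hb₀₁ : a (n + 1) - a (n + 2) ≤ a n - a (n + 1) := hb (by simp) (by simp) n.le_succ
  have hs' : 0 < |s| := abs_pos.2 hs
  have hU : |U| ≤ (a n - a (n + 1)) / |s| := by
    rw [abs_mul, abs_mul, abs_two] at hB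
    rw [le_div_iff₀ hs']
    linarith
  have hrepr : ∑' k, C (k + n + 1) * a (k + n + 1) + S n / (2 * s) * a n =
      (S n * (a n - a (n + 1)) + U) / (2 * s) := by
    field_simp
    linear_combination hA
  rw [hrepr, abs_div, abs_mul, abs_two, div_mul_eq_mul_div]
  gcongr
  have hb₀ : 0 ≤ a n - a (n + 1) := hb₁.trans hb₀₁
  calc |S n * (a n - a (n + 1)) + U| ≤ |S n| * (a n - a (n + 1)) + |U| :=
        (abs_add_le _ _).trans_eq (by rw [abs_mul, abs_of_nonneg hb₀])
    _ ≤ 1 * (a n - a (n + 1)) + (a n - a (n + 1)) / |s| := by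
        gcongr
        exact hS n
    _ = (1 + 1 / |s|) * (a n - a (n + 1)) := by ring

end DirichletTail

theorem sin_add_half_sub_sin_sub_half (x t : ℝ) :
    sin (x + t / 2) - sin (x - t / 2) = 2 * sin (t / 2) * cos x := by
  rw [sin_sub_sin]; ring_nf

theorem cos_sub_half_sub_cos_add_half (x t : ℝ) :
    cos (x - t / 2) - cos (x + t / 2) = 2 * sin (t / 2) * sin x := by
  rw [cos_sub_cos, show (x - t / 2 + (x + t / 2)) / 2 = x by ring,
    show (x - t / 2 - (x + t / 2)) / 2 = -(t / 2) by ring, sin_neg]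
  ring

theorem exists_rpow_neg_sub_rpow_neg_add_one_eq (p : ℝ) {x : ℝ} (hx : 0 < x) :
    ∃ c ∈ Ioo x (x + 1), x ^ (-p) - (x + 1) ^ (-p) = p * c ^ (-p - 1) := by
  have hderiv : ∀ y ∈ Ioo x (x + 1), HasDerivAt (fun y => y ^ (-p)) (-p * y ^ (-p - 1)) y :=
    fun y hy => by simpa using hasDerivAt_rpow_const (p := -p) (Or.inl (hx.trans hy.1).ne')
  have hcont : ContinuousOn (fun y => y ^ (-p)) (Icc x (x + 1)) :=
    fun y hy => (continuousAt_rpow_const y (-p) (Or.inl (hx.trans_le hy.1).ne')).continuousWithinAt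
  obtain ⟨c, hc, hslope⟩ := exists_hasDerivAt_eq_slope _ _ (lt_add_one x) hcont hderiv
  refine ⟨c, hc, ?_⟩
  rw [add_sub_cancel_left, div_one] at hslope
  linarith

theorem rpow_neg_sub_rpow_neg_add_one_le {p x : ℝ} (hp : 0 ≤ p) (hx : 0 < x) :
    x ^ (-p) - (x + 1) ^ (-p) ≤ p * x ^ (-p - 1) := by
  obtain ⟨c, hc, hceq⟩ := exists_rpow_neg_sub_rpow_neg_add_one_eq p hx
  rw [hceq]
  exact mul_le_mul_of_nonneg_left (rpow_le_rpow_of_nonpos hx hc.1.le (by linarith)) hp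

theorem antitoneOn_natCast_rpow_neg_sub {p : ℝ} (hp : 0 ≤ p) :
    AntitoneOn (fun m : ℕ => (m : ℝ) ^ (-p) - ((m + 1 : ℕ) : ℝ) ^ (-p)) (Ici 1) := by
  refine antitoneOn_nat_Ici_of_succ_le fun m hm => ?_
  have hm' : (0 : ℝ) < m := by exact_mod_cast hm
  obtain ⟨c, hc, hceq⟩ := exists_rpow_neg_sub_rpow_neg_add_one_eq p hm'
  obtain ⟨d, hd, hdeq⟩ := exists_rpow_neg_sub_rpow_neg_add_one_eq p (hm'.trans (lt_add_one _))
  push_cast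
  rw [hceq, hdeq]
  exact mul_le_mul_of_nonneg_left
    (rpow_le_rpow_of_nonpos (hm'.trans hc.1) (hc.2.trans hd.1).le (by linarith)) hp

theorem abs_tsum_cos_mul_rpow_neg_add_le {p t : ℝ} (hp : 1 < p) (ht : sin (t / 2) ≠ 0)
    {n : ℕ} (hn : 1 ≤ n) :
    |∑' k : ℕ, cos ((k + n + 1 : ℕ) * t) * ((k + n + 1 : ℕ) : ℝ) ^ (-p) +
        sin ((2 * n + 1) * t / 2) / (2 * sin (t / 2)) * (n : ℝ) ^ (-p)| ≤
      (1 + 1 / |sin (t / 2)|) / (2 * |sin (t / 2)|) * (p * (n : ℝ) ^ (-p - 1)) := by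
  have hn' : (0 : ℝ) < n := by exact_mod_cast hn
  refine (abs_tsum_mul_add_div_mul_le (S := fun m : ℕ => sin ((2 * m + 1) * t / 2))
    (C := fun m : ℕ => cos (m * t)) (a := fun m : ℕ => (m : ℝ) ^ (-p)) ht
    (fun _ => abs_sin_le_one _) (fun _ => abs_cos_le_one _) (fun m => ?_) (fun m => ?_) ?_
    ((antitoneOn_natCast_rpow_neg_sub (by linarith)).mono (Ici_subset_Ici.2 hn))).trans ?_
  · have := sin_add_half_sub_sin_sub_half (((m + 1 : ℕ) : ℝ) * t) t
    push_cast at this ⊢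
    convert this using 3 <;> ring
  · have := cos_sub_half_sub_cos_add_half ((2 * m + 1) * t / 2) t
    push_cast at this ⊢
    convert this using 3 <;> ring
  · exact summable_nat_rpow.2 (by linarith)
  · push_cast
    exact mul_le_mul_of_nonneg_left (rpow_neg_sub_rpow_neg_add_one_le (by linarith) hn')
      (by positivity)

/-- For `ν > 0` and `sin(t/2) ≠ 0`, as `n → ∞`:
`∑_{k=n+1}^∞ cos(kt)/k^(ν+1) = -D_n(t) n^{-ν-1} + O(n^{-ν-2})`, where
`D_n(t) = sin((2n+1)t/2)/(2 sin(t/2))` is the Dirichlet kernel. -/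
theorem cos_tail_dirichlet_asymptotic (ν t : ℝ) (hν : ν > 0)
    (ht : Real.sin (t / 2) ≠ 0) :
    (fun n : ℕ =>
        (∑' k : ℕ, Real.cos ((k + n + 1 : ℕ) * t) / ((k + n + 1 : ℕ) : ℝ) ^ (ν + 1)) +
          (Real.sin ((2 * n + 1) * t / 2) / (2 * Real.sin (t / 2))) *
            (n : ℝ) ^ (-ν - 1)) =O[atTop]
      (fun n : ℕ => (n : ℝ) ^ (-ν - 2)) := by
  refine IsBigO.of_bound ((1 + 1 / |sin (t / 2)|) / (2 * |sin (t / 2)|) * (ν + 1)) ?_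
  filter_upwards [eventually_ge_atTop 1] with n hn
  have hdiv : ∀ m : ℕ, cos (m * t) / (m : ℝ) ^ (ν + 1) = cos (m * t) * (m : ℝ) ^ (-(ν + 1)) :=
    fun m => by rw [rpow_neg m.cast_nonneg, div_eq_mul_inv]
  rw [norm_eq_abs, norm_of_nonneg (rpow_nonneg n.cast_nonneg _), show -ν - 1 = -(ν + 1) by ring,
    show -ν - 2 = -(ν + 1) - 1 by ring, mul_assoc]
  simp_rw [hdiv]
  exact abs_tsum_cos_mul_rpow_neg_add_le (by linarith) ht hn
end

section
/- If f(x) = (1-x)^γ ln(1-x) with γ a positive integer, then the Chebyshev coefficients a_k of f satisfy a_k = O(k^{-2γ-1}) as k → ∞ (i.e., the logarithmic factor in the generic estimate O(ln(k) k^{-2γ-1}) disappears when γ is an integer and μ = 1). -/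
/-!
Substituting `x = cos θ` turns the coefficient into `(2/π) · logMoment γ k`, where
`logMoment γ k = ∫₀^π (1 - cos θ)^γ log (1 - cos θ) cos kθ dθ`. For `γ = 0`, differentiating
`log (1 - cos θ) (sin (k+1)θ - sin kθ)` shows that `k · logMoment 0 k` is the same for all
`k ≥ 1`, namely `-π`. Multiplying by `1 - cos θ` and using
`2 cos θ cos kθ = cos (k+1)θ + cos (k-1)θ` gives a three-term recurrence in `γ`, solved exactly
by `logMoment γ k = (-1)^(γ+1) π (2γ)! / (2^γ (k-γ)(k-γ+1)⋯(k+γ))` for `k > γ`: no logarithm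
survives. The denominator has `2γ+1` factors, each at least `k/2` once `k ≥ 2γ`.
-/

open Real Filter Asymptotics MeasureTheory Set Polynomial
open scoped Nat

theorem integral_div_sqrt_one_sub_sq_eq_integral_cos (g : ℝ → ℝ) :
    ∫ x in (-1 : ℝ)..1, g x / √(1 - x ^ 2) = ∫ θ in 0..π, g (cos θ) := by
  rw [intervalIntegral.integral_of_le (by norm_num), intervalIntegral.integral_of_le pi_pos.le,
    ← integral_Icc_eq_integral_Ioc, ← integral_Icc_eq_integral_Ioc, ← bijOn_cos.image_eq,
    integral_image_eq_integral_abs_deriv_smul measurableSet_Icc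
      (fun θ _ => (hasDerivAt_cos θ).hasDerivWithinAt) injOn_cos,
    integral_Icc_eq_integral_Ioo, integral_Icc_eq_integral_Ioo]
  refine setIntegral_congr_fun measurableSet_Ioo fun θ hθ => ?_
  have hsin : 0 < sin θ := sin_pos_of_pos_of_lt_pi hθ.1 hθ.2
  rw [abs_neg, abs_of_pos hsin, ← sin_eq_sqrt_one_sub_cos_sq hθ.1.le hθ.2.le, smul_eq_mul]
  field_simp

theorem integral_cos_nat_mul {m : ℕ} (hm : m ≠ 0) : ∫ θ in 0..π, cos (m * θ) = 0 := by
  rw [intervalIntegral.integral_comp_mul_left _ (Nat.cast_ne_zero.2 hm), integral_cos]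
  simp [sin_nat_mul_pi]

theorem intervalIntegrable_log_one_sub_cos (a b : ℝ) :
    IntervalIntegrable (fun θ => log (1 - cos θ)) volume a b :=
  (analyticOnNhd_const.sub analyticOnNhd_cos).meromorphicOn.intervalIntegrable_log

theorem continuous_log_one_sub_cos_mul_sin_sub_sin (ν : ℝ) :
    Continuous fun θ => log (1 - cos θ) * (sin ((ν + 1) * θ) - sin (ν * θ)) := by
  have hlog (s : ℝ) : log (2 * s ^ 2) * s = log 2 * s + 2 * (s * log s) := by
    rcases eq_or_ne s 0 with rfl | hs
    · simp
    · rw [log_mul two_ne_zero (pow_ne_zero 2 hs), log_pow]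
      push_cast
      ring
  -- With `s = sin (θ/2)`: `1 - cos θ = 2 s²` and the difference of sines is
  -- `2 s cos ((2ν+1)θ/2)`, so the logarithm only enters through the continuous `s log s`.
  have h : (fun θ => log (1 - cos θ) * (sin ((ν + 1) * θ) - sin (ν * θ))) = fun θ =>
      2 * cos ((2 * ν + 1) * θ / 2) *
        (log 2 * sin (θ / 2) + 2 * (sin (θ / 2) * log (sin (θ / 2)))) := by
    funext θ
    have hcos := cos_two_mul_eq_one_sub (θ / 2)
    rw [mul_div_cancel₀ θ two_ne_zero] at hcos
    rw [hcos, sin_sub_sin, sub_sub_cancel, ← hlog]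
    ring_nf
  rw [h]
  have := continuous_mul_log.comp (continuous_sin.comp (continuous_id.div_const 2))
  fun_prop

theorem hasDerivAt_log_one_sub_cos_mul_sin_sub_sin (ν : ℝ) {θ : ℝ} (hθ : cos θ ≠ 1) :
    HasDerivAt (fun θ => log (1 - cos θ) * (sin ((ν + 1) * θ) - sin (ν * θ)))
      ((ν + 1) * (log (1 - cos θ) * cos ((ν + 1) * θ)) - ν * (log (1 - cos θ) * cos (ν * θ))
        + (cos ((ν + 1) * θ) + cos (ν * θ))) θ := by
  have htrig : (sin ((ν + 1) * θ) - sin (ν * θ)) * sin θ =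
      (cos ((ν + 1) * θ) + cos (ν * θ)) * (1 - cos θ) := by
    rw [add_one_mul ν θ, sin_add, cos_add]
    linear_combination cos (ν * θ) * sin_sq_add_cos_sq θ
  have hlog := ((hasDerivAt_cos θ).const_sub 1).log (sub_ne_zero.2 hθ.symm)
  have hsin :=
    ((hasDerivAt_id' θ).const_mul (ν + 1)).sin.fun_sub ((hasDerivAt_id' θ).const_mul ν).sin
  refine (hlog.fun_mul hsin).congr_deriv ?_
  field_simp
  linear_combination htrig

noncomputable def logMoment (γ k : ℕ) : ℝ :=
  ∫ θ in 0..π, (1 - cos θ) ^ γ * log (1 - cos θ) * cos (k * θ)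

theorem integral_div_sqrt_eq_logMoment (γ k : ℕ) :
    ∫ x in (-1 : ℝ)..1,
        ((1 - x) ^ γ * log (1 - x)) * (Chebyshev.T ℝ k).eval x / √(1 - x ^ 2) =
      logMoment γ k :=
  (integral_div_sqrt_one_sub_sq_eq_integral_cos _).trans
    (by simp [logMoment, Chebyshev.T_real_cos])

theorem intervalIntegrable_logMoment (γ k : ℕ) :
    IntervalIntegrable (fun θ => (1 - cos θ) ^ γ * log (1 - cos θ) * cos (k * θ)) volume 0 π :=
  ((intervalIntegrable_log_one_sub_cos 0 π).continuousOn_mul (by fun_prop)).mul_continuousOn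
    (by fun_prop)

theorem logMoment_succ_succ (γ k : ℕ) :
    logMoment (γ + 1) (k + 1) =
      logMoment γ (k + 1) - (logMoment γ (k + 2) + logMoment γ k) / 2 := by
  have hcos (θ : ℝ) :
      cos ((k + 2 : ℕ) * θ) + cos (k * θ) = 2 * cos θ * cos ((k + 1 : ℕ) * θ) := by
    rw [cos_add_cos]
    push_cast
    ring_nf
  have hI := intervalIntegrable_logMoment γ
  simp only [logMoment]
  rw [← intervalIntegral.integral_add (hI (k + 2)) (hI k), ← intervalIntegral.integral_div,
    ← intervalIntegral.integral_sub (hI (k + 1)) (((hI (k + 2)).add (hI k)).div_const 2)]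
  congr 1
  funext θ
  linear_combination (1 - cos θ) ^ γ * log (1 - cos θ) / 2 * hcos θ

theorem succ_mul_logMoment_zero_succ (k : ℕ) :
    (k + 1) * logMoment 0 (k + 1) = k * logMoment 0 k - ∫ θ in 0..π, cos (k * θ) := by
  have hlog (ν : ℝ) :
      IntervalIntegrable (fun θ => log (1 - cos θ) * cos (ν * θ)) volume 0 π :=
    (intervalIntegrable_log_one_sub_cos 0 π).mul_continuousOn (by fun_prop)
  have hcos (ν : ℝ) : IntervalIntegrable (fun θ => cos (ν * θ)) volume 0 π :=
    (by fun_prop : Continuous fun θ => cos (ν * θ)).intervalIntegrable 0 π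
  have hFTC := intervalIntegral.integral_eq_sub_of_hasDerivAt_of_le pi_pos.le
    (continuous_log_one_sub_cos_mul_sin_sub_sin k).continuousOn
    (fun θ hθ => hasDerivAt_log_one_sub_cos_mul_sin_sub_sin k
      (by simpa using (cos_lt_cos_of_nonneg_of_le_pi le_rfl hθ.2.le hθ.1).ne))
    ((((hlog _).const_mul _).sub ((hlog _).const_mul _)).add ((hcos _).add (hcos _)))
  rw [intervalIntegral.integral_add (((hlog _).const_mul _).sub ((hlog _).const_mul _))
      ((hcos _).add (hcos _)),
    intervalIntegral.integral_sub ((hlog _).const_mul _) ((hlog _).const_mul _),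
    intervalIntegral.integral_add (hcos _) (hcos _), intervalIntegral.integral_const_mul,
    intervalIntegral.integral_const_mul] at hFTC
  have hcos_succ : ∫ θ in 0..π, cos ((k + 1) * θ) = 0 := by
    exact_mod_cast integral_cos_nat_mul k.succ_ne_zero
  have hsin_succ : sin ((k + 1) * π) = 0 := by exact_mod_cast sin_nat_mul_pi (k + 1)
  simp only [logMoment, pow_zero, one_mul, Nat.cast_succ]
  simp [hcos_succ, hsin_succ] at hFTC
  linarith

theorem natCast_mul_logMoment_zero {k : ℕ} (hk : 1 ≤ k) : k * logMoment 0 k = -π := by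
  induction k, hk using Nat.le_induction with
  | base => simpa using succ_mul_logMoment_zero_succ 0
  | succ k hk ih =>
    rw [Nat.cast_succ, succ_mul_logMoment_zero_succ, ih, integral_cos_nat_mul (by omega), sub_zero]

theorem descPochhammer_eval_succ_left {R : Type*} [CommRing R] (n : ℕ) (s : R) :
    (descPochhammer R (n + 1)).eval s = s * (descPochhammer R n).eval (s - 1) := by
  simp [descPochhammer_succ_left, eval_comp]

theorem descPochhammer_eval_add_one_mul {R : Type*} [CommRing R] (n : ℕ) (s : R) :
    (descPochhammer R n).eval (s + 1) * (s + 1 - n) = (s + 1) * (descPochhammer R n).eval s := by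
  rw [← descPochhammer_succ_eval, descPochhammer_eval_succ_left, add_sub_cancel_right]

theorem descPochhammer_eval_add_two {R : Type*} [CommRing R] (n : ℕ) (s : R) :
    (descPochhammer R (n + 2)).eval (s + 1) = (s + 1) * (descPochhammer R n).eval s * (s - n) := by
  rw [descPochhammer_eval_succ_left, add_sub_cancel_right, descPochhammer_succ_eval, mul_assoc]

theorem logMoment_mul_descPochhammer {γ k : ℕ} (hk : γ < k) :
    logMoment γ k * (descPochhammer ℝ (2 * γ + 1)).eval ((k : ℝ) + γ) =
      (-1) ^ (γ + 1) * π * (2 * γ)! / 2 ^ γ := by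
  induction γ generalizing k with
  | zero => simp [mul_comm, natCast_mul_logMoment_zero hk]
  | succ γ ih =>
    obtain ⟨m, rfl⟩ : ∃ m, k = m + 1 := ⟨k - 1, by omega⟩
    have h₀ := ih (k := m) (by omega)
    have h₁ := ih (k := m + 1) (by omega)
    have h₂ := ih (k := m + 2) (by omega)
    have s₀ := descPochhammer_eval_add_one_mul (2 * γ + 1) ((m : ℝ) + γ)
    have s₁ := descPochhammer_eval_add_one_mul (2 * γ + 1) ((m : ℝ) + 1 + γ)
    have e := descPochhammer_eval_add_two (R := ℝ) (2 * γ + 1) ((m : ℝ) + 1 + γ)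
    rw [logMoment_succ_succ, show 2 * (γ + 1) + 1 = 2 * γ + 1 + 2 by ring,
      show 2 * (γ + 1) = 2 * γ + 1 + 1 by ring, Nat.factorial_succ, Nat.factorial_succ]
    push_cast at *
    rw [show (m : ℝ) + 1 + (γ + 1) = m + 1 + γ + 1 by ring, e]
    rw [show (m : ℝ) + γ + 1 = m + 1 + γ by ring] at s₀
    rw [show (m : ℝ) + 1 + γ + 1 = m + 2 + γ by ring] at s₁
    set t : ℝ := m + 1
    -- The new constant is the old one times `(t² - (γ+1)²) - ((t-γ)(t-γ-1) + (t+γ)(t+γ+1))/2`,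
    -- which is `-(γ+1)(2γ+1)`, independent of `t`.
    linear_combination (t + γ + 1) * (t - γ - 1) * h₁ - (t - γ - 1) * (t - γ) / 2 * h₂
      - (t + γ + 1) * (t + γ) / 2 * h₀ + (t - γ - 1) * logMoment γ (m + 2) / 2 * s₁
      - (t + γ + 1) * logMoment γ m / 2 * s₀

theorem abs_logMoment_le {γ k : ℕ} (hk : 2 * γ < k) :
    |logMoment γ k| ≤ π * (2 * γ)! * 2 ^ (γ + 1) / (k : ℝ) ^ (2 * γ + 1) := by
  have hk' : 2 * (γ : ℝ) + 1 ≤ k := by exact_mod_cast hk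
  have hk₀ : (0 : ℝ) < k := by exact_mod_cast Nat.zero_lt_of_lt hk
  have hpow :
      ((k : ℝ) / 2) ^ (2 * γ + 1) ≤ (descPochhammer ℝ (2 * γ + 1)).eval ((k : ℝ) + γ) := by
    refine (pow_le_pow_left₀ (by positivity) ?_ _).trans
      (pow_le_descPochhammer_eval (by push_cast; linarith))
    push_cast
    linarith
  have hP : 0 < (descPochhammer ℝ (2 * γ + 1)).eval ((k : ℝ) + γ) :=
    (by positivity : (0 : ℝ) < ((k : ℝ) / 2) ^ (2 * γ + 1)).trans_le hpow
  rw [eq_div_of_mul_eq hP.ne' (logMoment_mul_descPochhammer (by omega)), abs_div, abs_of_pos hP,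
    abs_div, abs_mul, abs_mul, abs_pow, abs_neg, abs_one, one_pow, one_mul, abs_of_pos pi_pos,
    abs_of_nonneg (by positivity), abs_of_pos (by positivity), div_div]
  calc π * (2 * γ)! / (2 ^ γ * (descPochhammer ℝ (2 * γ + 1)).eval ((k : ℝ) + γ))
      ≤ π * (2 * γ)! / (2 ^ γ * ((k : ℝ) / 2) ^ (2 * γ + 1)) := by gcongr
    _ = π * (2 * γ)! * 2 ^ (γ + 1) / (k : ℝ) ^ (2 * γ + 1) := by
      rw [div_pow]
      field_simp
      ring

theorem chebyshev_coeff_integer_gamma_log_general (γ : ℕ) :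
    (fun k : ℕ => (2 / π) * ∫ x in (-1 : ℝ)..1,
        ((1 - x) ^ γ * Real.log (1 - x)) *
          (Polynomial.Chebyshev.T ℝ k).eval x / Real.sqrt (1 - x ^ 2)) =O[atTop]
      (fun k : ℕ => (k : ℝ) ^ (-(2 * (γ : ℝ)) - 1)) := by
  simp_rw [integral_div_sqrt_eq_logMoment]
  refine IsBigO.const_mul_left (IsBigO.of_bound (π * (2 * γ)! * 2 ^ (γ + 1)) ?_) _
  filter_upwards [eventually_gt_atTop (2 * γ)] with k hk
  have hk₀ : (0 : ℝ) ≤ k := k.cast_nonneg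
  rw [norm_eq_abs, norm_of_nonneg (rpow_nonneg hk₀ _),
    show -(2 * (γ : ℝ)) - 1 = -((2 * γ + 1 : ℕ) : ℝ) by push_cast; ring, rpow_neg hk₀,
    rpow_natCast, ← div_eq_mul_inv]
  exact abs_logMoment_le hk

/-- For `f(x) = (1-x)^γ ln(1-x)` with `γ` a positive integer, the Chebyshev
coefficients satisfy `a_k = O(k^{-2γ-1})` as `k → ∞`. -/
theorem chebyshev_coeff_integer_gamma_log (γ : ℕ) (hγ : 1 ≤ γ) :
    (fun k : ℕ => (2 / π) * ∫ x in (-1 : ℝ)..1,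
        ((1 - x) ^ γ * Real.log (1 - x)) *
          (Polynomial.Chebyshev.T ℝ k).eval x / Real.sqrt (1 - x ^ 2)) =O[atTop]
      (fun k : ℕ => (k : ℝ) ^ (-(2 * (γ : ℝ)) - 1)) :=
  chebyshev_coeff_integer_gamma_log_general γ
end
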